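/- arXiv:2206.13001 — 4 statements merged into one kernel-verified Lean document; each statement's English description precedes it below -/
import Mathlib

section
/- Let M be a compact boundaryless smooth manifold, f a C¹ vector field on M with complete flow φ, D ⊂ M a nonempty compact codimension-one submanifold transversal to the flow direction, and I : D → M a continuous map with I(D) ∩ D = ∅. Then every point x ∈ D satisfies the special strong tube condition: there exist λ > 0, a closed set L ⊂ M and a section S = F({λ},L) through x with S = F([0,2λ],L) ∩ D and F([0,λ],L) ∩ I(D) = ∅. -/
/-!
Near `x ∈ D`, write `D` as a level set `{Φ = c}` with `Φ` increasing along the flow (replace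
`Φ` by `-Φ` if necessary). Since the derivative of `Φ` along `f` is continuous, `Φ` grows at a
uniform rate `m > 0` along orbit segments in a neighbourhood `W` of `x`, which can be taken
disjoint from the closed set `I(D)`. Take a closed neighbourhood `C ⊆ W` of `x` whose orbits stay in
`W` for times `|t| ≤ 2λ`, and the bar `L = φ_λ(D ∩ C)`. A short orbit segment meets the level
set at most once, which gives the disjointness of the time slices and `S = F([0,2λ],L) ∩ D`;
the intermediate value theorem along orbits shows that the tube is a neighbourhood of `x`.
-/

open Set
open scoped Manifold

/-- `S` is a codimension-one submanifold of `M` transversal to the direction of the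
vector field `f`: every `p ∈ S` has an open neighbourhood `U` and a `C¹` function
`Φ : U → ℝ` with `S ∩ U = Φ⁻¹(c)` and `dΦ_q(f(q)) ≠ 0` for all `q ∈ S ∩ U`. -/
def TransversalCodimOne {E : Type*} [NormedAddCommGroup E] [NormedSpace ℝ E]
    {H : Type*} [TopologicalSpace H] (J : ModelWithCorners ℝ E H)
    {M : Type*} [TopologicalSpace M] [ChartedSpace H M]
    (f : (x : M) → TangentSpace J x) (S : Set M) : Prop :=
  ∀ p ∈ S, ∃ (U : Set M) (Φ : M → ℝ) (c : ℝ),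
    IsOpen U ∧ p ∈ U ∧ ContMDiffOn J 𝓘(ℝ, ℝ) 1 Φ U ∧
    S ∩ U = U ∩ Φ ⁻¹' {c} ∧
    ∀ q ∈ S ∩ U, mfderiv J 𝓘(ℝ, ℝ) Φ q (f q) ≠ 0

/-- The tube `F([a,b],L) = {y : φ(t,y) ∈ L for some t ∈ [a,b]}`, where
`F(t,x) = {y : φ(t,y) = x}`. -/
def tube {M : Type*} (φ : ℝ → M → M) (L : Set M) (a b : ℝ) : Set M :=
  {y | ∃ t : ℝ, a ≤ t ∧ t ≤ b ∧ φ t y ∈ L}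

/-- `S = F({lam},L) = φ_lam⁻¹(L)` is a section through `x` with bar `L`:  `L` and `S`
are closed, `x ∈ S`, the tube `F([0,2lam],L)` contains a neighbourhood of `x`, and
`F({ν},L) ∩ F({ζ},L) = ∅` for `0 ≤ ν < ζ ≤ 2lam`. -/
def isSection {M : Type*} [TopologicalSpace M] (φ : ℝ → M → M) (x : M)
    (lam : ℝ) (L : Set M) : Prop :=
  0 < lam ∧ IsClosed L ∧ IsClosed (φ lam ⁻¹' L) ∧ x ∈ φ lam ⁻¹' L ∧
    tube φ L 0 (2 * lam) ∈ nhds x ∧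
    ∀ ν ζ : ℝ, 0 ≤ ν → ν < ζ → ζ ≤ 2 * lam → (φ ν ⁻¹' L) ∩ (φ ζ ⁻¹' L) = ∅

/-- A point `x ∈ D` satisfies the special strong tube condition (SSTC): there is a
section `S = F({lam},L)` through `x` with `S = F([0,2lam],L) ∩ D` and
`F([0,lam],L) ∩ I(D) = ∅`. -/
def satisfiesSSTC {M : Type*} [TopologicalSpace M] (φ : ℝ → M → M) (D : Set M)
    (I : M → M) (x : M) : Prop :=
  ∃ (lam : ℝ) (L : Set M), isSection φ x lam L ∧
    φ lam ⁻¹' L = tube φ L 0 (2 * lam) ∩ D ∧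
    tube φ L 0 lam ∩ (I '' D) = ∅

open Filter Topology

section FlowIncreasing

variable {M : Type*} {φ : ℝ → M → M} {Φ : M → ℝ} {W : Set M} {m : ℝ}

def FlowIncreasing (φ : ℝ → M → M) (Φ : M → ℝ) (W : Set M) (m : ℝ) : Prop :=
  ∀ y a b, a ≤ b → MapsTo (φ · y) (Icc a b) W → m * (b - a) ≤ Φ (φ b y) - Φ (φ a y)

theorem FlowIncreasing.mono {W' : Set M} (h : FlowIncreasing φ Φ W m) (hW : W' ⊆ W) :
    FlowIncreasing φ Φ W' m :=
  fun y a b hab hy => h y a b hab (hy.mono_right hW)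

theorem flowIncreasing_of_hasDerivAt {A : M → ℝ}
    (hder : ∀ y t, φ t y ∈ W → HasDerivAt (fun s => Φ (φ s y)) (A (φ t y)) t)
    (hA : ∀ z ∈ W, m ≤ A z) : FlowIncreasing φ Φ W m := by
  intro y a b hab hy
  have hder' : ∀ τ ∈ Icc a b, HasDerivAt (fun s => Φ (φ s y)) (A (φ τ y)) τ :=
    fun τ hτ => hder y τ (hy hτ)
  exact (convex_Icc a b).mul_sub_le_image_sub_of_le_deriv
    (fun τ hτ => (hder' τ hτ).continuousAt.continuousWithinAt)
    (fun τ hτ => (hder' τ (interior_subset hτ)).differentiableAt.differentiableWithinAt)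
    (fun τ hτ => (hder' τ (interior_subset hτ)).deriv ▸ hA _ (hy (interior_subset hτ)))
    a (left_mem_Icc.2 hab) b (right_mem_Icc.2 hab) hab

end FlowIncreasing

section Flow

variable {M : Type*} [TopologicalSpace M] (ϕ : Flow ℝ M) {Φ : M → ℝ} {W D : Set M} {m c : ℝ}

theorem Flow.eventually_mapsTo_Icc {x : M} (hW : IsOpen W) (hx : x ∈ W) :
    ∃ δ > 0, ∀ᶠ y in 𝓝 x, MapsTo (ϕ · y) (Icc (-δ) δ) W := by
  have hev : ∀ᶠ p in 𝓝 (0 : ℝ) ×ˢ 𝓝 x, ϕ p.1 p.2 ∈ W := by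
    rw [← nhds_prod_eq]
    exact (ϕ.continuous continuous_fst continuous_snd).continuousAt.preimage_mem_nhds
      (hW.mem_nhds (by rwa [ϕ.map_zero_apply]))
  obtain ⟨P, hP, Q, hQ, hPQ⟩ := eventually_prod_iff.1 hev
  obtain ⟨ε, hε, hball⟩ := Metric.eventually_nhds_iff.1 hP
  refine ⟨ε / 2, half_pos hε, hQ.mono fun y hy t ht => hPQ (hball ?_) hy⟩
  rw [Real.dist_eq, sub_zero, abs_lt]
  constructor <;> linarith [ht.1, ht.2]

theorem Flow.apply_mem_image_iff {K : Set M} {l t : ℝ} {y : M} :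
    ϕ t y ∈ ϕ l '' K ↔ ϕ (t - l) y ∈ K := by
  rw [ϕ.image_eq_preimage_symm, mem_preimage, ← ϕ.map_add, neg_add_eq_sub]

variable {ϕ}

theorem FlowIncreasing.eq_zero_of_mem (h : FlowIncreasing ϕ Φ W m) (hm : 0 < m)
    (hlevel : ∀ y ∈ W, y ∈ D ↔ Φ y = c) {y : M} {δ t : ℝ}
    (hy : MapsTo (ϕ · y) (Icc (-δ) δ) W) (ht : |t| ≤ δ) (hyD : y ∈ D) (htD : ϕ t y ∈ D) :
    t = 0 := by
  rw [abs_le] at ht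
  have hyW : y ∈ W := by
    simpa [ϕ.map_zero_apply] using hy (⟨by linarith, by linarith⟩ : (0 : ℝ) ∈ Icc (-δ) δ)
  have hΦ : Φ (ϕ t y) = Φ (ϕ 0 y) := by
    rw [ϕ.map_zero_apply, (hlevel _ (hy ht)).1 htD, (hlevel y hyW).1 hyD]
  rcases lt_trichotomy t 0 with hneg | hzero | hpos
  · have := h y t 0 hneg.le (hy.mono_left (Icc_subset_Icc ht.1 (by linarith)))
    nlinarith
  · exact hzero
  · have := h y 0 t hpos.le (hy.mono_left (Icc_subset_Icc (by linarith) ht.2))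
    nlinarith

theorem FlowIncreasing.exists_apply_eq (h : FlowIncreasing ϕ Φ W m) (hΦ : ContinuousOn Φ W)
    {y : M} {l : ℝ} (hl : 0 ≤ l) (hy : MapsTo (ϕ · y) (Icc (-l) l) W)
    (hc : |Φ y - c| ≤ m * l) : ∃ s ∈ Icc (-l) l, Φ (ϕ s y) = c := by
  have hfwd := h y 0 l hl (hy.mono_left (Icc_subset_Icc (by linarith) le_rfl))
  have hbwd := h y (-l) 0 (by linarith) (hy.mono_left (Icc_subset_Icc le_rfl hl))
  rw [ϕ.map_zero_apply] at hfwd hbwd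
  rw [abs_le] at hc
  have hyc : Continuous (ϕ · y) := ϕ.continuous continuous_id continuous_const
  exact intermediate_value_Icc (by linarith) (hΦ.comp hyc.continuousOn hy)
    ⟨by dsimp only [Function.comp_apply]; linarith, by dsimp only [Function.comp_apply]; linarith⟩

/-- By the intermediate value theorem, every orbit through a point near `x` crosses `D ∩ C`
within time `l`. -/
theorem FlowIncreasing.exists_tube_mem_nhds (h : FlowIncreasing ϕ Φ W m) (hm : 0 < m)
    (hW : IsOpen W) (hΦ : ContinuousOn Φ W) (hlevel : ∀ y ∈ W, y ∈ D ↔ Φ y = c) {x : M}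
    (hxW : x ∈ W) (hxD : x ∈ D) {C : Set M} (hC : C ∈ 𝓝 x) :
    ∃ l₀ > 0, ∀ l, 0 < l → l ≤ l₀ → tube ϕ (ϕ l '' (D ∩ C)) 0 (2 * l) ∈ 𝓝 x := by
  obtain ⟨l₀, hl₀, hN⟩ := ϕ.eventually_mapsTo_Icc (isOpen_interior.inter hW)
    ⟨mem_interior_iff_mem_nhds.2 hC, hxW⟩
  refine ⟨l₀, hl₀, fun l hl hll₀ => ?_⟩
  have hΦx : ∀ᶠ w in 𝓝 x, |Φ w - c| ≤ m * l := by
    have := (hΦ.continuousAt (hW.mem_nhds hxW)).eventually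
      (Metric.closedBall_mem_nhds (Φ x) (mul_pos hm hl))
    rwa [(hlevel x hxW).1 hxD] at this
  filter_upwards [hN, hΦx] with w hw hwc
  have hwl : MapsTo (ϕ · w) (Icc (-l) l) (interior C ∩ W) :=
    hw.mono_left (Icc_subset_Icc (neg_le_neg hll₀) hll₀)
  obtain ⟨s, hs, hsc⟩ := h.exists_apply_eq hΦ hl.le (hwl.mono_right inter_subset_right) hwc
  have hsW := hwl hs
  refine ⟨s + l, by linarith [hs.1], by linarith [hs.2], ϕ.apply_mem_image_iff.2 ?_⟩
  rw [add_sub_cancel_right]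
  exact ⟨(hlevel _ hsW.2).2 hsc, interior_subset hsW.1⟩

theorem FlowIncreasing.satisfiesSSTC [RegularSpace M] (h : FlowIncreasing ϕ Φ W m)
    (hm : 0 < m) (hW : IsOpen W) (hΦ : ContinuousOn Φ W) (hlevel : ∀ y ∈ W, y ∈ D ↔ Φ y = c)
    (hD : IsClosed D) {I : M → M} (hWI : Disjoint W (I '' D)) {x : M} (hxW : x ∈ W)
    (hxD : x ∈ D) : satisfiesSSTC ϕ D I x := by
  obtain ⟨δ, hδ, hV⟩ := ϕ.eventually_mapsTo_Icc hW hxW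
  obtain ⟨C, hCx, hC, hCV⟩ := exists_mem_nhds_isClosed_subset hV
  obtain ⟨l₀, hl₀, htube⟩ := h.exists_tube_mem_nhds hm hW hΦ hlevel hxW hxD hCx
  set l := min l₀ (δ / 2)
  have hl : 0 < l := lt_min hl₀ (half_pos hδ)
  have hCW : ∀ a ∈ C, MapsTo (ϕ · a) (Icc (-(2 * l)) (2 * l)) W := fun a ha =>
    (hCV ha).mono_left (Icc_subset_Icc (by linarith [min_le_right l₀ (δ / 2)])
      (by linarith [min_le_right l₀ (δ / 2)]))
  have hrigid : ∀ a ∈ D ∩ C, ∀ s, |s| ≤ 2 * l → ϕ s a ∈ D → s = 0 := fun a ha _ hs hsD =>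
    h.eq_zero_of_mem hm hlevel (hCW a ha.2) hs ha.1 hsD
  have hback : ∀ s y, ϕ (-s) (ϕ s y) = y := fun s => (ϕ.toHomeomorph s).symm_apply_apply
  have hS : ϕ l ⁻¹' (ϕ l '' (D ∩ C)) = D ∩ C :=
    preimage_image_eq _ (ϕ.toHomeomorph l).injective
  refine ⟨l, ϕ l '' (D ∩ C), ⟨hl, (ϕ.toHomeomorph l).isClosedMap _ (hD.inter hC),
    by rw [hS]; exact hD.inter hC, by rw [hS]; exact ⟨hxD, mem_of_mem_nhds hCx⟩,
    htube l hl (min_le_left _ _), ?_⟩, ?_, ?_⟩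
  · intro ν ζ hν hνζ hζ
    refine eq_empty_of_forall_notMem fun y ⟨hyν, hyζ⟩ => ?_
    rw [mem_preimage, ϕ.apply_mem_image_iff] at hyν hyζ
    have hζν : ϕ (ζ - ν) (ϕ (ν - l) y) = ϕ (ζ - l) y := by rw [← ϕ.map_add]; ring_nf
    have := hrigid _ hyν (ζ - ν) (by rw [abs_le]; constructor <;> linarith) (hζν ▸ hyζ.1)
    linarith
  · rw [hS]
    ext y
    refine ⟨fun hy => ⟨⟨l, hl.le, by linarith, mem_image_of_mem _ hy⟩, hy.1⟩, ?_⟩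
    rintro ⟨⟨t, ht0, ht, hyt⟩, hyD⟩
    rw [ϕ.apply_mem_image_iff] at hyt
    have hlt := hrigid _ hyt (-(t - l)) (by rw [abs_le]; constructor <;> linarith)
      (by rwa [hback])
    rwa [← hback (t - l) y, hlt, ϕ.map_zero_apply]
  · refine eq_empty_of_forall_notMem fun y ⟨⟨t, ht0, ht, hyt⟩, hyI⟩ => ?_
    rw [ϕ.apply_mem_image_iff] at hyt
    have hyW : y ∈ W := hback (t - l) y ▸ hCW _ hyt.2 ⟨by linarith, by linarith⟩
    exact hWI.notMem_of_mem_left hyW hyI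

end Flow

section Manifold

variable {E : Type*} [NormedAddCommGroup E] [NormedSpace ℝ E]
  {H : Type*} [TopologicalSpace H] {J : ModelWithCorners ℝ E H}
  {M : Type*} [TopologicalSpace M] [ChartedSpace H M]
  {f : (x : M) → TangentSpace J x} {Φ : M → ℝ}

theorem IsMIntegralCurve.hasDerivAt_comp {γ : ℝ → M} (hγ : IsMIntegralCurve γ f) {t : ℝ}
    (hΦ : MDifferentiableAt J 𝓘(ℝ, ℝ) Φ (γ t)) :
    HasDerivAt (Φ ∘ γ) (mfderiv J 𝓘(ℝ, ℝ) Φ (γ t) (f (γ t))) t := by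
  have h := hΦ.hasMFDerivAt.comp t (hγ t)
  rw [hasMFDerivAt_iff_hasFDerivAt] at h
  refine h.congr_fderiv ?_
  ext
  show mfderiv J 𝓘(ℝ, ℝ) Φ (γ t) ((1 : ℝ) • f (γ t)) =
    (1 : ℝ) • mfderiv J 𝓘(ℝ, ℝ) Φ (γ t) (f (γ t))
  rw [one_smul, one_smul]

theorem ContMDiffOn.continuousOn_mfderiv_apply [IsManifold J 1 M] {U : Set M} (hU : IsOpen U)
    (hΦ : ContMDiffOn J 𝓘(ℝ, ℝ) 1 Φ U)
    (hf : Continuous fun x : M => (⟨x, f x⟩ : TangentBundle J M)) :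
    ContinuousOn (fun z => mfderiv J 𝓘(ℝ, ℝ) Φ z (f z)) U := by
  have hT : ContinuousOn (fun z : M => tangentMapWithin J 𝓘(ℝ, ℝ) Φ U ⟨z, f z⟩) U :=
    (hΦ.continuousOn_tangentMapWithin le_rfl hU.uniqueMDiffOn).comp hf.continuousOn
      fun _ hz => hz
  refine ((continuous_snd.comp (tangentBundleModelSpaceHomeomorph 𝓘(ℝ, ℝ)).continuous
    ).comp_continuousOn hT).congr fun z hz => ?_
  simp only [Function.comp_apply, tangentMapWithin, mfderivWithin_of_isOpen hU hz,
    tangentBundleModelSpaceHomeomorph_coe]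
  rfl

theorem exists_flowIncreasing_of_mfderiv_pos [IsManifold J 1 M]
    (hf : Continuous fun x : M => (⟨x, f x⟩ : TangentBundle J M))
    {φ : ℝ → M → M} (hφ : ∀ x : M, IsMIntegralCurve (fun t => φ t x) f)
    {D U : Set M} {c : ℝ} (hU : IsOpen U) (hΦ : ContMDiffOn J 𝓘(ℝ, ℝ) 1 Φ U)
    (hlevel : ∀ y ∈ U, y ∈ D ↔ Φ y = c) {x : M} (hx : x ∈ U)
    (hpos : (0 : ℝ) < mfderiv J 𝓘(ℝ, ℝ) Φ x (f x)) :
    ∃ (W : Set M) (Ψ : M → ℝ) (c' m : ℝ), IsOpen W ∧ x ∈ W ∧ ContinuousOn Ψ W ∧ 0 < m ∧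
      FlowIncreasing φ Ψ W m ∧ ∀ y ∈ W, y ∈ D ↔ Ψ y = c' := by
  set A : M → ℝ := fun z => mfderiv J 𝓘(ℝ, ℝ) Φ z (f z)
  set W := U ∩ A ⁻¹' Ioi (A x / 2)
  have hWU : W ⊆ U := inter_subset_left
  refine ⟨W, Φ, c, A x / 2, (hΦ.continuousOn_mfderiv_apply hU hf).isOpen_inter_preimage hU
    isOpen_Ioi, ⟨hx, half_lt_self hpos⟩, hΦ.continuousOn.mono hWU, half_pos hpos,
    flowIncreasing_of_hasDerivAt (fun y t ht => ?_) fun z hz => hz.2.le,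
    fun y hy => hlevel y (hWU hy)⟩
  exact (hφ y).hasDerivAt_comp ((hΦ.contMDiffAt (hU.mem_nhds (hWU ht))).mdifferentiableAt
    one_ne_zero)

theorem TransversalCodimOne.exists_flowIncreasing [IsManifold J 1 M] {D : Set M}
    (hD : TransversalCodimOne J f D)
    (hf : Continuous fun x : M => (⟨x, f x⟩ : TangentBundle J M))
    {φ : ℝ → M → M} (hφ : ∀ x : M, IsMIntegralCurve (fun t => φ t x) f) {x : M} (hx : x ∈ D) :
    ∃ (W : Set M) (Ψ : M → ℝ) (c m : ℝ), IsOpen W ∧ x ∈ W ∧ ContinuousOn Ψ W ∧ 0 < m ∧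
      FlowIncreasing φ Ψ W m ∧ ∀ y ∈ W, y ∈ D ↔ Ψ y = c := by
  obtain ⟨U, Φ, c, hU, hxU, hΦ, hDU, hder⟩ := hD x hx
  have hlevel : ∀ y ∈ U, y ∈ D ↔ Φ y = c := fun y hy => by
    simpa [hy] using Set.ext_iff.1 hDU y
  rcases lt_or_gt_of_ne (α := ℝ) (hder x ⟨hx, hxU⟩) with hneg | hpos
  · refine exists_flowIncreasing_of_mfderiv_pos (Φ := -Φ) (c := -c) hf hφ hU hΦ.neg
      (fun y hy => (hlevel y hy).trans neg_inj.symm) hxU ?_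
    rw [mfderiv_neg]
    exact neg_pos.2 hneg
  · exact exists_flowIncreasing_of_mfderiv_pos hf hφ hU hΦ hlevel hxU hpos

end Manifold

theorem stmt_1_general {E : Type*} [NormedAddCommGroup E] [NormedSpace ℝ E]
    {H : Type*} [TopologicalSpace H] {J : ModelWithCorners ℝ E H}
    {M : Type*} [TopologicalSpace M] [CompactSpace M] [T2Space M] [ChartedSpace H M]
    [IsManifold J (⊤ : ℕ∞) M]
    (f : (x : M) → TangentSpace J x)
    (hf : ContMDiff J J.tangent 1 (fun x : M => (⟨x, f x⟩ : TangentBundle J M)))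
    (φ : ℝ → M → M)
    (hφcont : Continuous fun p : ℝ × M => φ p.1 p.2)
    (hφ0 : ∀ x, φ 0 x = x)
    (hφadd : ∀ t s : ℝ, ∀ x, φ (t + s) x = φ t (φ s x))
    (hφint : ∀ x : M, IsMIntegralCurve (fun t => φ t x) f)
    (D : Set M) (hDcomp : IsCompact D)
    (hDtrans : TransversalCodimOne J f D)
    (I : M → M) (hIcont : ContinuousOn I D) (hID : (I '' D) ∩ D = ∅) :
    ∀ x ∈ D, satisfiesSSTC φ D I x := by
  intro x hx
  let ϕ : Flow ℝ M := ⟨φ, hφcont, hφadd, hφ0⟩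
  obtain ⟨W, Φ, c, m, hW, hxW, hΦ, hm, hinc, hlevel⟩ :=
    hDtrans.exists_flowIncreasing hf.continuous hφint hx
  have hIcl : IsClosed (I '' D) := (hDcomp.image_of_continuousOn hIcont).isClosed
  have hxI : x ∉ I '' D := (disjoint_iff_inter_eq_empty.2 hID).notMem_of_mem_right hx
  have hinc' : FlowIncreasing ϕ Φ (W ∩ (I '' D)ᶜ) m := hinc.mono inter_subset_left
  exact hinc'.satisfiesSSTC hm (hW.inter hIcl.isOpen_compl) (hΦ.mono inter_subset_left)
    (fun y hy => hlevel y hy.1) hDcomp.isClosed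
    (Disjoint.mono_left inter_subset_right disjoint_compl_left) ⟨hxW, hxI⟩ hx

/-- Let M be a compact boundaryless smooth manifold, f a C¹ vector field
on M with complete flow φ, D ⊆ M a nonempty compact codimension-one submanifold
transversal to the flow direction, and I : D → M continuous with I(D) ∩ D = ∅. Then
every point x ∈ D satisfies the special strong tube condition. -/
theorem stmt_1 {E : Type*} [NormedAddCommGroup E] [NormedSpace ℝ E]
    [FiniteDimensional ℝ E]
    {H : Type*} [TopologicalSpace H] {J : ModelWithCorners ℝ E H} [J.Boundaryless]
    {M : Type*} [TopologicalSpace M] [CompactSpace M] [T2Space M] [ChartedSpace H M]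
    [IsManifold J (⊤ : ℕ∞) M]
    (f : (x : M) → TangentSpace J x)
    (hf : ContMDiff J J.tangent 1 (fun x : M => (⟨x, f x⟩ : TangentBundle J M)))
    (φ : ℝ → M → M)
    (hφcont : Continuous fun p : ℝ × M => φ p.1 p.2)
    (hφ0 : ∀ x, φ 0 x = x)
    (hφadd : ∀ t s : ℝ, ∀ x, φ (t + s) x = φ t (φ s x))
    (hφint : ∀ x : M, IsMIntegralCurve (fun t => φ t x) f)
    (D : Set M) (hD : D.Nonempty) (hDcomp : IsCompact D)
    (hDtrans : TransversalCodimOne J f D)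
    (I : M → M) (hIcont : ContinuousOn I D) (hID : (I '' D) ∩ D = ∅) :
    ∀ x ∈ D, satisfiesSSTC φ D I x :=
  stmt_1_general f hf φ hφcont hφ0 hφadd hφint D hDcomp hDtrans I hIcont hID
end

section
/- Let M be a compact metric space and φ : ℝ × M → M a continuous flow (φ(0,·) = id, φ(t+s,·) = φ(t,·)∘φ(s,·) for all t,s ∈ ℝ). Let D ⊂ M, let S ⊂ D be a compact set, and let λ > 0 be such that φ(t,s) ∉ D for all s ∈ S and t ∈ (0,2λ]. Set L = φ(λ, S) = {φ(λ,s) : s ∈ S}. Then F({α},L) ∩ F({β},L) = ∅ whenever 0 ≤ α < β ≤ 2λ, where for t ≥ 0 and Y ⊂ M, F({t},Y) = {y ∈ M : φ(t,y) ∈ Y}. -/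
/-- Let M be a compact metric space and φ a continuous flow. Let D ⊆ M,
S ⊆ D compact, and λ > 0 be such that φ(t,s) ∉ D for all s ∈ S and t ∈ (0,2λ].
Set L = φ(λ,S). Then F({α},L) ∩ F({β},L) = ∅ whenever 0 ≤ α < β ≤ 2λ, where
F({t},Y) = {y : φ(t,y) ∈ Y}. -/
theorem stmt_4 {M : Type*} [MetricSpace M] [CompactSpace M]
    (φ : ℝ → M → M)
    (hφcont : Continuous fun p : ℝ × M => φ p.1 p.2)
    (hφ0 : ∀ x, φ 0 x = x)
    (hφadd : ∀ t s : ℝ, ∀ x, φ (t + s) x = φ t (φ s x))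
    (D : Set M) (S : Set M) (hS : IsCompact S) (hSD : S ⊆ D)
    (lam : ℝ) (hlam : 0 < lam)
    (hout : ∀ s ∈ S, ∀ t : ℝ, 0 < t → t ≤ 2 * lam → φ t s ∉ D)
    (L : Set M) (hL : L = φ lam '' S) :
    ∀ α β : ℝ, 0 ≤ α → α < β → β ≤ 2 * lam →
      (φ α ⁻¹' L) ∩ (φ β ⁻¹' L) = ∅ := by
  intro α β hα hαβ hβ
  ext y
  simp only [Set.mem_inter_iff, Set.mem_preimage, Set.mem_empty_iff_false, iff_false]
  rintro ⟨hy1, hy2⟩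
  rw [hL] at hy1 hy2
  obtain ⟨s₁, hs₁, he₁⟩ := hy1
  obtain ⟨s₂, hs₂, he₂⟩ := hy2
  -- φ (β - α) s₂' where: φ λ s₂ = φ β y = φ (β - α) (φ α y) = φ (β - α) (φ λ s₁)
  have key : φ lam s₂ = φ (β - α + lam) s₁ := by
    have h1 : φ (β - α) (φ α y) = φ β y := by
      rw [← hφadd]; ring_nf
    rw [he₂, ← h1, ← he₁, ← hφadd]
  -- apply φ (-λ)
  have inj : φ (β - α) s₁ = s₂ := by
    have := congrArg (φ (-lam)) key
    rw [← hφadd, ← hφadd] at this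
    simp only [neg_add_cancel, hφ0] at this
    have h2 : -lam + (β - α + lam) = β - α := by ring
    rw [h2] at this
    exact this.symm
  exact hout s₁ hs₁ (β - α) (by linarith) (by linarith) (inj ▸ hSD hs₂)
end

section
/- Let (M,φ,D,I) be an impulsive dynamical system on a compact metric space with I(D) ∩ D = ∅, and let ψ be the impulsive semiflow generated by (M,φ,D,I). Assume every point of D satisfies the special strong tube condition. Then the non-wandering set is invariant off the impulsive set: ψ_t(Ω_ψ \ D) ⊆ Ω_ψ \ D for every t > 0. -/
open Set
open scoped ENNReal

/-- The first hitting time `τ₁(x) = inf {t > 0 : φ(t,x) ∈ D} ∈ (0,∞]` of the set `D`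
under the semiflow `φ`, as an extended nonnegative real. -/
noncomputable def firstHittingTime {M : Type*} (φ : ℝ → M → M) (D : Set M) (x : M) : ℝ≥0∞ :=
  sInf {r : ℝ≥0∞ | ∃ t : ℝ, 0 < t ∧ φ t x ∈ D ∧ r = ENNReal.ofReal t}

/-- `x` is a non-wandering point of the (not necessarily continuous) semiflow `ψ`. -/
def nonWandering {M : Type*} [TopologicalSpace M] (ψ : ℝ → M → M) (x : M) : Prop :=
  ∀ U : Set M, IsOpen U → x ∈ U → ∀ T : ℝ, 0 < T →
    ∃ t : ℝ, T ≤ t ∧ ((ψ t ⁻¹' U) ∩ U).Nonempty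

set_option linter.unusedSectionVars false

namespace Stmt7Aux

variable {M : Type*} [MetricSpace M] [CompactSpace M]

lemma tau_le (φ : ℝ → M → M) (D : Set M) {x : M} {t : ℝ} (ht : 0 < t) (h : φ t x ∈ D) :
    firstHittingTime φ D x ≤ ENNReal.ofReal t :=
  sInf_le ⟨t, ht, h, rfl⟩

lemma notMem_of_lt_tau (φ : ℝ → M → M) (D : Set M) {x : M} {t : ℝ} (ht : 0 < t)
    (h : ENNReal.ofReal t < firstHittingTime φ D x) : φ t x ∉ D :=
  fun hm => absurd (tau_le φ D ht hm) (not_le.2 h)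

lemma le_tau (φ : ℝ → M → M) (D : Set M) {x : M} {c : ℝ}
    (h : ∀ s, 0 < s → s ≤ c → φ s x ∉ D) : ENNReal.ofReal c ≤ firstHittingTime φ D x := by
  refine le_sInf ?_
  rintro r ⟨t, ht, hmem, rfl⟩
  exact ENNReal.ofReal_le_ofReal (le_of_not_ge fun hle => h t ht hle hmem)

/-- continuity of `t ↦ φ t x` on `Ici 0`. -/
lemma flow_contOn (φ : ℝ → M → M)
    (hφcont : ContinuousOn (fun p : ℝ × M => φ p.1 p.2) (Ici 0 ×ˢ univ)) (x : M) :
    ContinuousOn (fun s => φ s x) (Ici 0) := by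
  have h : ContinuousOn ((fun p : ℝ × M => φ p.1 p.2) ∘ (fun s : ℝ => (s, x))) (Ici 0) := by
    refine hφcont.comp (by fun_prop) ?_
    intro s hs; exact ⟨hs, mem_univ _⟩
  exact h

/-- continuity of `y ↦ φ t y` for `t ≥ 0`. -/
lemma flow_cont_space (φ : ℝ → M → M)
    (hφcont : ContinuousOn (fun p : ℝ × M => φ p.1 p.2) (Ici 0 ×ˢ univ)) {t : ℝ} (ht : 0 ≤ t) :
    Continuous (φ t) := by
  have h : Continuous ((fun p : ℝ × M => φ p.1 p.2) ∘ (fun y : M => (t, y))) := by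
    refine hφcont.comp_continuous (by fun_prop) ?_
    intro y; exact ⟨ht, mem_univ _⟩
  exact h

/-- positivity of τ off D -/
lemma tau_pos (φ : ℝ → M → M)
    (hφcont : ContinuousOn (fun p : ℝ × M => φ p.1 p.2) (Ici 0 ×ˢ univ))
    (hφ0 : ∀ x, φ 0 x = x)
    {D : Set M} (hDcl : IsClosed D) {x : M} (hx : x ∉ D) :
    ∃ δ : ℝ, 0 < δ ∧ ENNReal.ofReal δ ≤ firstHittingTime φ D x := by
  have hc : ContinuousWithinAt (fun s => φ s x) (Ici 0) 0 :=
    (flow_contOn φ hφcont x).continuousWithinAt (self_mem_Ici)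
  have hev : ∀ᶠ s in nhdsWithin 0 (Ici 0), φ s x ∈ Dᶜ := by
    apply hc.eventually_mem
    simp only [hφ0 x]
    exact hDcl.isOpen_compl.mem_nhds hx
  rw [eventually_nhdsWithin_iff] at hev
  rcases Metric.eventually_nhds_iff.1 hev with ⟨ε, hε, hball⟩
  refine ⟨ε / 2, by positivity, le_tau φ D ?_⟩
  intro s hs hsle hmem
  have : φ s x ∈ Dᶜ := by
    refine hball (y := s) ?_ (le_of_lt hs)
    rw [Real.dist_eq, sub_zero, abs_of_pos hs]
    linarith
  exact this hmem


/-- the infimum hitting time is attained: if τ(x) is finite, `φ (τ x).toReal x ∈ D`. -/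
lemma hit_mem (φ : ℝ → M → M)
    (hφcont : ContinuousOn (fun p : ℝ × M => φ p.1 p.2) (Ici 0 ×ˢ univ))
    {D : Set M} (hDcl : IsClosed D) {x : M} (hfin : firstHittingTime φ D x ≠ ⊤) :
    φ (firstHittingTime φ D x).toReal x ∈ D := by
  set A : Set ℝ := {t : ℝ | 0 < t ∧ φ t x ∈ D} with hA
  have himg : {r : ℝ≥0∞ | ∃ t : ℝ, 0 < t ∧ φ t x ∈ D ∧ r = ENNReal.ofReal t}
      = ENNReal.ofReal '' A := by
    ext r; constructor
    · rintro ⟨t, ht, hm, rfl⟩; exact ⟨t, ⟨ht, hm⟩, rfl⟩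
    · rintro ⟨t, ⟨ht, hm⟩, rfl⟩; exact ⟨t, ht, hm, rfl⟩
  have hAne : A.Nonempty := by
    by_contra hne
    apply hfin
    rw [firstHittingTime, himg, not_nonempty_iff_eq_empty.1 hne]
    simp
  have hbdd : BddBelow A := ⟨0, fun t ht => le_of_lt ht.1⟩
  set a := sInf A with ha
  have ha0 : 0 ≤ a := le_csInf hAne (fun t ht => le_of_lt ht.1)
  have htau : firstHittingTime φ D x = ENNReal.ofReal a := by
    apply le_antisymm
    · refine ENNReal.le_of_forall_pos_le_add ?_
      intro ε hε _
      obtain ⟨t, htA, htlt⟩ := Real.lt_sInf_add_pos hAne (by exact_mod_cast hε)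
      calc firstHittingTime φ D x ≤ ENNReal.ofReal t := tau_le φ D htA.1 htA.2
        _ ≤ ENNReal.ofReal (a + ε) := ENNReal.ofReal_le_ofReal (le_of_lt htlt)
        _ ≤ ENNReal.ofReal a + ENNReal.ofReal ε := ENNReal.ofReal_add_le
        _ = ENNReal.ofReal a + ε := by rw [ENNReal.ofReal_coe_nnreal]
    · rw [firstHittingTime, himg]
      refine le_sInf ?_
      rintro r ⟨t, htA, rfl⟩
      exact ENNReal.ofReal_le_ofReal (csInf_le hbdd htA)
  have htr : (firstHittingTime φ D x).toReal = a := by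
    rw [htau, ENNReal.toReal_ofReal ha0]
  rw [htr]
  have hB : IsClosed {t : ℝ | t ∈ Ici (0:ℝ) ∧ φ t x ∈ D} := by
    exact (flow_contOn φ hφcont x).preimage_isClosed_of_isClosed isClosed_Ici hDcl
  have hsub : A ⊆ {t : ℝ | t ∈ Ici (0:ℝ) ∧ φ t x ∈ D} :=
    fun t ht => ⟨le_of_lt ht.1, ht.2⟩
  have : a ∈ {t : ℝ | t ∈ Ici (0:ℝ) ∧ φ t x ∈ D} := by
    have hcl : a ∈ closure A := csInf_mem_closure hAne hbdd
    exact hB.closure_subset (closure_mono hsub hcl)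
  exact this.2

/-- uniform avoidance: if the orbit segment of `y` over `[0,c]` avoids closed `D`,
the same holds for all nearby points. -/
lemma avoid (φ : ℝ → M → M)
    (hφcont : ContinuousOn (fun p : ℝ × M => φ p.1 p.2) (Ici 0 ×ˢ univ))
    {D : Set M} (hDcl : IsClosed D) {y : M} {c : ℝ}
    (h : ∀ s, 0 ≤ s → s ≤ c → φ s y ∉ D) :
    ∀ᶠ w in nhds y, ∀ s, 0 ≤ s → s ≤ c → φ s w ∉ D := by
  set W : Set (ℝ × M) := {p : ℝ × M | p ∈ (Icc 0 c ×ˢ univ) ∧ φ p.1 p.2 ∈ D} with hW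
  have hWcl : IsClosed W := by
    have hsub : ContinuousOn (fun p : ℝ × M => φ p.1 p.2) (Icc 0 c ×ˢ univ) :=
      hφcont.mono (prod_mono Icc_subset_Ici_self subset_rfl)
    exact hsub.preimage_isClosed_of_isClosed ((isClosed_Icc).prod isClosed_univ) hDcl
  have hWcomp : IsCompact W :=
    (isCompact_Icc.prod isCompact_univ).of_isClosed_subset hWcl (fun p hp => hp.1)
  have hKcomp : IsCompact (Prod.snd '' W) := hWcomp.image continuous_snd
  have hyK : y ∉ Prod.snd '' W := by
    rintro ⟨⟨s, w⟩, ⟨⟨hs, _⟩, hm⟩, rfl⟩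
    exact h s hs.1 hs.2 hm
  have : (Prod.snd '' W)ᶜ ∈ nhds y := hKcomp.isClosed.isOpen_compl.mem_nhds hyK
  filter_upwards [this] with w hw s hs0 hsc hmem
  exact hw ⟨(s, w), ⟨⟨⟨hs0, hsc⟩, mem_univ _⟩, hmem⟩, rfl⟩


/-- uniform positive lower bound for the hitting time on a compact set disjoint from D. -/
lemma tau_unif (φ : ℝ → M → M)
    (hφcont : ContinuousOn (fun p : ℝ × M => φ p.1 p.2) (Ici 0 ×ˢ univ))
    (hφ0 : ∀ x, φ 0 x = x)
    {D : Set M} (hDcl : IsClosed D) {K : Set M} (hKcomp : IsCompact K)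
    (hKD : ∀ y ∈ K, y ∉ D) :
    ∃ ξ : ℝ, 0 < ξ ∧ ∀ y ∈ K, ENNReal.ofReal ξ ≤ firstHittingTime φ D y := by
  set C : Set (ℝ × M) := {p : ℝ × M | p ∈ (Icc (0:ℝ) 1 ×ˢ K) ∧ φ p.1 p.2 ∈ D} with hC
  have hCcl : IsClosed C := by
    have hsub : ContinuousOn (fun p : ℝ × M => φ p.1 p.2) (Icc 0 1 ×ˢ K) :=
      hφcont.mono (prod_mono Icc_subset_Ici_self (subset_univ K))
    exact hsub.preimage_isClosed_of_isClosed (isClosed_Icc.prod hKcomp.isClosed) hDcl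
  have hCcomp : IsCompact C :=
    (isCompact_Icc.prod hKcomp).of_isClosed_subset hCcl (fun p hp => hp.1)
  set Ts : Set ℝ := Prod.fst '' C with hTs
  have hTscomp : IsCompact Ts := hCcomp.image continuous_fst
  have h0 : (0:ℝ) ∉ Ts := by
    rintro ⟨⟨s, w⟩, ⟨⟨_, hwK⟩, hm⟩, rfl⟩
    simp only at hm
    rw [hφ0 w] at hm
    exact hKD w hwK hm
  rcases eq_empty_or_nonempty Ts with hemp | hne
  · refine ⟨1, one_pos, fun y hy => le_tau φ D ?_⟩
    intro s hs hs1 hmem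
    have : s ∈ Ts := ⟨(s, y), ⟨⟨⟨le_of_lt hs, hs1⟩, hy⟩, hmem⟩, rfl⟩
    rw [hemp] at this; exact this
  · have hbdd : BddBelow Ts := hTscomp.bddBelow
    have hmem : sInf Ts ∈ Ts := hTscomp.isClosed.csInf_mem hne hbdd
    have hge : 0 ≤ sInf Ts := by
      refine le_csInf hne ?_
      rintro t ⟨⟨s, w⟩, ⟨⟨hs, _⟩, _⟩, rfl⟩; exact hs.1
    have hpos : 0 < sInf Ts := lt_of_le_of_ne hge (by intro h; exact h0 (by rw [h]; exact hmem))
    refine ⟨min (sInf Ts / 2) 1, by positivity, fun y hy => le_tau φ D ?_⟩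
    intro s hs hsle hmemD
    have hs1 : s ≤ 1 := le_trans hsle (min_le_right _ _)
    have : s ∈ Ts := ⟨(s, y), ⟨⟨⟨le_of_lt hs, hs1⟩, hy⟩, hmemD⟩, rfl⟩
    have : sInf Ts ≤ s := csInf_le hbdd this
    have : sInf Ts ≤ min (sInf Ts / 2) 1 := le_trans this hsle
    have := le_trans this (min_le_left _ _)
    linarith


/-- near a section point, crossing times of the bar are close to `lam`. -/
lemma cross (φ : ℝ → M → M)
    (hφcont : ContinuousOn (fun p : ℝ × M => φ p.1 p.2) (Ici 0 ×ˢ univ))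
    {z : M} {lam : ℝ} {L : Set M} (hsec : isSection φ z lam L) {ε' : ℝ} (hε' : 0 < ε') :
    ∀ᶠ z' in nhds z, ∀ s, 0 ≤ s → s ≤ 2 * lam → φ s z' ∈ L → |s - lam| < ε' := by
  obtain ⟨hlam, hLcl, _, hzS, _, hdisj⟩ := hsec
  set T : Set ℝ := Icc 0 (2*lam) ∩ {s : ℝ | ε' ≤ |s - lam|} with hT
  have hTcl : IsClosed T :=
    isClosed_Icc.inter (isClosed_le continuous_const (by fun_prop))
  have hTsub : T ⊆ Icc 0 (2*lam) := inter_subset_left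
  set W : Set (ℝ × M) := {p : ℝ × M | p ∈ (T ×ˢ univ) ∧ φ p.1 p.2 ∈ L} with hW
  have hWcl : IsClosed W := by
    have hsub : ContinuousOn (fun p : ℝ × M => φ p.1 p.2) (T ×ˢ univ) :=
      hφcont.mono (prod_mono (fun s hs => (hTsub hs).1) subset_rfl)
    exact hsub.preimage_isClosed_of_isClosed (hTcl.prod isClosed_univ) hLcl
  have hWcomp : IsCompact W :=
    ((isCompact_Icc.of_isClosed_subset hTcl hTsub).prod isCompact_univ).of_isClosed_subset
      hWcl (fun p hp => hp.1)
  have hKcomp : IsCompact (Prod.snd '' W) := hWcomp.image continuous_snd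
  have hzK : z ∉ Prod.snd '' W := by
    rintro ⟨⟨s, w⟩, ⟨⟨⟨⟨hs0, hs2⟩, habs⟩, _⟩, hm⟩, rfl⟩
    simp only [mem_setOf_eq] at habs hm
    have hne : s ≠ lam := by
      intro h; rw [h] at habs; simp at habs; linarith
    rcases lt_or_gt_of_ne hne with h | h
    · have hd := hdisj s lam hs0 h (by linarith)
      have hmem2 : w ∈ (φ s ⁻¹' L) ∩ (φ lam ⁻¹' L) := ⟨hm, hzS⟩
      rw [hd] at hmem2; exact hmem2
    · have hd := hdisj lam s (le_of_lt hlam) h hs2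
      have hmem2 : w ∈ (φ lam ⁻¹' L) ∩ (φ s ⁻¹' L) := ⟨hzS, hm⟩
      rw [hd] at hmem2; exact hmem2
  have : (Prod.snd '' W)ᶜ ∈ nhds z := hKcomp.isClosed.isOpen_compl.mem_nhds hzK
  filter_upwards [this] with z' hz' s hs0 hs2 hmem
  by_contra habs
  push_neg at habs
  exact hz' ⟨(s, z'), ⟨⟨⟨⟨hs0, hs2⟩, habs⟩, mem_univ _⟩, hmem⟩, rfl⟩

/-- continuity (with finiteness) of the first hitting time at points off `D`
with finite hitting time, under SSTC. -/
lemma tau_cont (φ : ℝ → M → M)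
    (hφcont : ContinuousOn (fun p : ℝ × M => φ p.1 p.2) (Ici 0 ×ˢ univ))
    (hφ0 : ∀ x, φ 0 x = x)
    (hφadd : ∀ t s : ℝ, 0 ≤ t → 0 ≤ s → ∀ x, φ (t + s) x = φ t (φ s x))
    {D : Set M} (hDcl : IsClosed D) {I : M → M}
    (hSSTC : ∀ x ∈ D, satisfiesSSTC φ D I x)
    {y : M} (hy : y ∉ D) (hfin : firstHittingTime φ D y ≠ ⊤) {ε : ℝ} (hε : 0 < ε) :
    ∀ᶠ w in nhds y, firstHittingTime φ D w ≠ ⊤ ∧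
      |(firstHittingTime φ D w).toReal - (firstHittingTime φ D y).toReal| ≤ ε := by
  set r := (firstHittingTime φ D y).toReal with hr
  have hofr : ENNReal.ofReal r = firstHittingTime φ D y := ENNReal.ofReal_toReal hfin
  have hrpos : 0 < r := by
    obtain ⟨δ, hδ, hδle⟩ := tau_pos φ hφcont hφ0 hDcl hy
    have := ENNReal.toReal_mono hfin hδle
    rw [ENNReal.toReal_ofReal (le_of_lt hδ)] at this
    linarith
  have hzD : φ r y ∈ D := hit_mem φ hφcont hDcl hfin
  obtain ⟨lam, L, hsec, hSD, _⟩ := hSSTC _ hzD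
  have hlam : 0 < lam := hsec.1
  set ε' := min ε (min lam r) / 2 with hε'
  have hε'pos : 0 < ε' := by positivity
  have hε'lam : ε' < lam := by
    have : min ε (min lam r) ≤ lam := le_trans (min_le_right _ _) (min_le_left _ _)
    rw [hε']; linarith
  have hε'r : ε' < r := by
    have : min ε (min lam r) ≤ r := le_trans (min_le_right _ _) (min_le_right _ _)
    rw [hε']; linarith
  have hε'ε : ε' ≤ ε := by
    have : min ε (min lam r) ≤ ε := min_le_left _ _
    rw [hε']; linarith
  -- pull back tube & crossing property along `φ r`
  have hgcont : Continuous (φ r) := flow_cont_space φ hφcont (le_of_lt hrpos)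
  have hE1 : ∀ᶠ w in nhds y,
      (∀ s, 0 ≤ s → s ≤ 2 * lam → φ s (φ r w) ∈ L → |s - lam| < ε') ∧
      φ r w ∈ tube φ L 0 (2*lam) := by
    have h1 := cross φ hφcont hsec hε'pos
    have h2 := hsec.2.2.2.2.1
    have := hgcont.continuousAt (x := y).preimage_mem_nhds (h1.and h2)
    exact this
  have hE3 : ∀ᶠ w in nhds y, ∀ s, 0 ≤ s → s ≤ r - ε' → φ s w ∉ D := by
    refine avoid φ hφcont hDcl ?_
    intro s hs0 hsle
    rcases eq_or_lt_of_le hs0 with h | h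
    · rw [← h, hφ0]; exact hy
    · refine notMem_of_lt_tau φ D h ?_
      rw [← hofr]
      exact (ENNReal.ofReal_lt_ofReal_iff hrpos).2 (by linarith)
  filter_upwards [hE1, hE3] with w ⟨hcross, htube⟩ havoid
  obtain ⟨s, hs0, hs2, hsL⟩ := htube
  have hslam : |s - lam| < ε' := hcross s hs0 hs2 hsL
  have habs := abs_lt.1 hslam
  set h := r + s - lam with hh
  have hhpos : 0 < h := by linarith [habs.1]
  have hhle : h ≤ r + ε' := by linarith [habs.2]
  have hφh : φ h w ∈ D := by
    have h1 : φ (lam + h) w = φ lam (φ h w) := hφadd lam h (le_of_lt hlam) (le_of_lt hhpos) w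
    have h2 : φ (s + r) w = φ s (φ r w) := hφadd s r hs0 (le_of_lt hrpos) w
    have h3 : lam + h = s + r := by rw [hh]; ring
    have : φ lam (φ h w) ∈ L := by rw [← h1, h3, h2]; exact hsL
    have hmem : φ h w ∈ φ lam ⁻¹' L := this
    rw [hSD] at hmem
    exact hmem.2
  have hupper : firstHittingTime φ D w ≤ ENNReal.ofReal (r + ε') :=
    le_trans (tau_le φ D hhpos hφh) (ENNReal.ofReal_le_ofReal hhle)
  have hlower : ENNReal.ofReal (r - ε') ≤ firstHittingTime φ D w := le_tau φ D
    (fun s hs0 hsle => havoid s (le_of_lt hs0) hsle)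
  have hwfin : firstHittingTime φ D w ≠ ⊤ :=
    ne_top_of_le_ne_top ENNReal.ofReal_ne_top hupper
  refine ⟨hwfin, ?_⟩
  have hub : (firstHittingTime φ D w).toReal ≤ r + ε' := by
    have := ENNReal.toReal_mono ENNReal.ofReal_ne_top hupper
    rwa [ENNReal.toReal_ofReal (by linarith)] at this
  have hlb : r - ε' ≤ (firstHittingTime φ D w).toReal := by
    have := ENNReal.toReal_mono hwfin hlower
    rwa [ENNReal.toReal_ofReal (by linarith)] at this
  rw [abs_le]; constructor <;> [linarith; linarith]


noncomputable def nxt (φ : ℝ → M → M) (D : Set M) (I : M → M) (y : M) : M :=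
  if firstHittingTime φ D y = ⊤ then y else I (φ (firstHittingTime φ D y).toReal y)

noncomputable def yseq (φ : ℝ → M → M) (D : Set M) (I : M → M) (y : M) : ℕ → M
  | 0 => y
  | (k+1) => nxt φ D I (yseq φ D I y k)

noncomputable def tseq (φ : ℝ → M → M) (D : Set M) (I : M → M) (y : M) : ℕ → ℝ
  | 0 => 0
  | (k+1) => tseq φ D I y k + (firstHittingTime φ D (yseq φ D I y k)).toReal

def Good (φ : ℝ → M → M) (D : Set M) (I : M → M) (y : M) (u : ℝ) : Prop :=
  ∀ k : ℕ, u ≠ tseq φ D I y (k+1)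

lemma yseq_shift (φ : ℝ → M → M) (D : Set M) (I : M → M) (y : M) (k : ℕ) :
    yseq φ D I (nxt φ D I y) k = yseq φ D I y (k+1) := by
  induction k with
  | zero => rfl
  | succ k ih => simp only [yseq, ih]

lemma tseq_shift (φ : ℝ → M → M) (D : Set M) (I : M → M) (y : M) (k : ℕ) :
    tseq φ D I (nxt φ D I y) k = tseq φ D I y (k+1) - tseq φ D I y 1 := by
  induction k with
  | zero => simp [tseq]
  | succ k ih => simp only [tseq, ih, yseq_shift]; ring

lemma Good_shift (φ : ℝ → M → M) (D : Set M) (I : M → M) {y : M} {u : ℝ}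
    (h : Good φ D I y u) :
    Good φ D I (nxt φ D I y) (u - (firstHittingTime φ D y).toReal) := by
  intro k
  rw [tseq_shift]
  have h1 : tseq φ D I y 1 = (firstHittingTime φ D y).toReal := by simp [tseq, yseq]
  rw [h1]
  intro habs
  exact h (k+1) (by linarith [sub_eq_sub_iff_sub_eq_sub.1 habs])


section Psi

variable (φ : ℝ → M → M) (D : Set M) (I : M → M) (ψ : ℝ → M → M)

lemma nxt_eq {y : M} (hfin : firstHittingTime φ D y ≠ ⊤) :
    nxt φ D I y = I (φ (firstHittingTime φ D y).toReal y) := by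
  simp [nxt, hfin]

lemma psi_jump_nxt
    (hψjump : ∀ x : M, firstHittingTime φ D x ≠ ⊤ →
      ψ (firstHittingTime φ D x).toReal x = I (φ (firstHittingTime φ D x).toReal x))
    {y : M} (hfin : firstHittingTime φ D y ≠ ⊤) :
    ψ (firstHittingTime φ D y).toReal y = nxt φ D I y := by
  rw [nxt_eq φ D I hfin]; exact hψjump y hfin

lemma notD_le
    (hφcont : ContinuousOn (fun p : ℝ × M => φ p.1 p.2) (Ici 0 ×ˢ univ))
    (hDcl : IsClosed D)
    (hID' : ∀ w ∈ I '' D, w ∉ D)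
    (hψφ : ∀ (x : M) (t : ℝ), 0 ≤ t → ENNReal.ofReal t < firstHittingTime φ D x →
      ψ t x = φ t x)
    (hψjump : ∀ x : M, firstHittingTime φ D x ≠ ⊤ →
      ψ (firstHittingTime φ D x).toReal x = I (φ (firstHittingTime φ D x).toReal x))
    {y : M} {t : ℝ} (ht : 0 < t)
    (hle : ENNReal.ofReal t ≤ firstHittingTime φ D y) : ψ t y ∉ D := by
  rcases lt_or_eq_of_le hle with hlt | heq
  · rw [hψφ y t (le_of_lt ht) hlt]
    exact notMem_of_lt_tau φ D ht hlt
  · have hfin : firstHittingTime φ D y ≠ ⊤ := by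
      rw [← heq]; exact ENNReal.ofReal_ne_top
    have htr : (firstHittingTime φ D y).toReal = t := by
      rw [← heq, ENNReal.toReal_ofReal (le_of_lt ht)]
    have hj := hψjump y hfin
    rw [htr] at hj
    rw [hj]
    refine hID' _ ⟨φ t y, ?_, rfl⟩
    have := hit_mem φ hφcont hDcl hfin
    rwa [htr] at this

lemma tau_lt_of (hgt : firstHittingTime φ D y < ENNReal.ofReal t) (ht : 0 < t) :
    (firstHittingTime φ D y).toReal < t := by
  have hfin : firstHittingTime φ D y ≠ ⊤ := hgt.ne_top
  have := (ENNReal.ofReal_lt_ofReal_iff ht).1 (by rwa [ENNReal.ofReal_toReal hfin])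
  exact this

lemma notD
    (hφcont : ContinuousOn (fun p : ℝ × M => φ p.1 p.2) (Ici 0 ×ˢ univ))
    (hDcl : IsClosed D)
    (hID' : ∀ w ∈ I '' D, w ∉ D)
    {ξ : ℝ} (hξpos : 0 < ξ)
    (hξ : ∀ y ∈ I '' D, ENNReal.ofReal ξ ≤ firstHittingTime φ D y)
    (hψadd : ∀ t s : ℝ, 0 ≤ t → 0 ≤ s → ∀ x, ψ (t + s) x = ψ t (ψ s x))
    (hψφ : ∀ (x : M) (t : ℝ), 0 ≤ t → ENNReal.ofReal t < firstHittingTime φ D x →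
      ψ t x = φ t x)
    (hψjump : ∀ x : M, firstHittingTime φ D x ≠ ⊤ →
      ψ (firstHittingTime φ D x).toReal x = I (φ (firstHittingTime φ D x).toReal x)) :
    ∀ n : ℕ, ∀ y, y ∉ D → ∀ t, 0 < t →
      (firstHittingTime φ D y = ⊤ ∨ t ≤ (firstHittingTime φ D y).toReal + n * ξ) →
      ψ t y ∉ D := by
  intro n
  induction n with
  | zero =>
    intro y hy t ht hbd
    refine notD_le φ D I ψ hφcont hDcl hID' hψφ hψjump ht ?_
    rcases hbd with h | h
    · rw [h]; exact le_top
    · rcases eq_or_ne (firstHittingTime φ D y) ⊤ with hfin | hfin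
      · rw [hfin]; exact le_top
      · simp only [Nat.cast_zero, zero_mul, add_zero] at h
        calc ENNReal.ofReal t ≤ ENNReal.ofReal (firstHittingTime φ D y).toReal :=
              ENNReal.ofReal_le_ofReal h
          _ = firstHittingTime φ D y := ENNReal.ofReal_toReal hfin
  | succ n ih =>
    intro y hy t ht hbd
    rcases le_or_gt (ENNReal.ofReal t) (firstHittingTime φ D y) with hle | hgt
    · exact notD_le φ D I ψ hφcont hDcl hID' hψφ hψjump ht hle
    · have hfin : firstHittingTime φ D y ≠ ⊤ := hgt.ne_top
      set r := (firstHittingTime φ D y).toReal with hrdef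
      have hr0 : 0 ≤ r := ENNReal.toReal_nonneg
      have hrt : r < t := tau_lt_of φ D hgt ht
      have hsplit : ψ t y = ψ (t - r) (ψ r y) := by
        have := hψadd (t - r) r (by linarith) hr0 y
        rw [sub_add_cancel] at this
        exact this
      have hjy : ψ r y = nxt φ D I y := psi_jump_nxt φ D I ψ hψjump hfin
      have hmemID : nxt φ D I y ∈ I '' D := by
        rw [nxt_eq φ D I hfin]
        exact ⟨_, hit_mem φ hφcont hDcl hfin, rfl⟩
      have hnotD : nxt φ D I y ∉ D := hID' _ hmemID
      rw [hsplit, hjy]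
      refine ih _ hnotD _ (by linarith) ?_
      rcases eq_or_ne (firstHittingTime φ D (nxt φ D I y)) ⊤ with h | h
      · exact Or.inl h
      · refine Or.inr ?_
        have hξle : ξ ≤ (firstHittingTime φ D (nxt φ D I y)).toReal := by
          have := ENNReal.toReal_mono h (hξ _ hmemID)
          rwa [ENNReal.toReal_ofReal (le_of_lt hξpos)] at this
        rcases hbd with hb | hb
        · exact absurd hb hfin
        · push_cast
          push_cast at hb
          linarith


lemma psiContA
    (hφcont : ContinuousOn (fun p : ℝ × M => φ p.1 p.2) (Ici 0 ×ˢ univ))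
    (hφ0 : ∀ x, φ 0 x = x)
    (hDcl : IsClosed D)
    (hψφ : ∀ (x : M) (t : ℝ), 0 ≤ t → ENNReal.ofReal t < firstHittingTime φ D x →
      ψ t x = φ t x)
    {y : M} {u : ℝ} (hy : y ∉ D) (hu : 0 ≤ u)
    (hlt : ENNReal.ofReal u < firstHittingTime φ D y) :
    ContinuousWithinAt (fun p : ℝ × M => ψ p.1 p.2) (Ici 0 ×ˢ univ) (u, y) := by
  -- choose `c` with `u < c` and `ofReal c < τ y`
  obtain ⟨c, hc1, hc2⟩ : ∃ c : ℝ, u < c ∧ ENNReal.ofReal c < firstHittingTime φ D y := by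
    rcases eq_or_ne (firstHittingTime φ D y) ⊤ with h | h
    · exact ⟨u + 1, by linarith, by rw [h]; exact ENNReal.ofReal_lt_top⟩
    · set ρ := (firstHittingTime φ D y).toReal with hρ
      have hofρ : ENNReal.ofReal ρ = firstHittingTime φ D y := ENNReal.ofReal_toReal h
      have huρ : u < ρ := by
        refine (ENNReal.ofReal_lt_ofReal_iff_of_nonneg hu).1 ?_
        rwa [hofρ]
      refine ⟨(u + ρ)/2, by linarith, ?_⟩
      rw [← hofρ]
      exact (ENNReal.ofReal_lt_ofReal_iff (by linarith)).2 (by linarith)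
  have hcpos : 0 < c := lt_of_le_of_lt hu hc1
  have hV : ∀ᶠ w in nhds y, ∀ s, 0 ≤ s → s ≤ c → φ s w ∉ D := by
    refine avoid φ hφcont hDcl ?_
    intro s hs0 hsle
    rcases eq_or_lt_of_le hs0 with hh | hh
    · rw [← hh, hφ0]; exact hy
    · exact notMem_of_lt_tau φ D hh
        (lt_of_le_of_lt (ENNReal.ofReal_le_ofReal hsle) hc2)
  have hbase : ContinuousWithinAt (fun p : ℝ × M => φ p.1 p.2) (Ici 0 ×ˢ univ) (u, y) :=
    hφcont (u, y) ⟨hu, mem_univ _⟩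
  refine hbase.congr_of_eventuallyEq ?_ (hψφ y u hu hlt)
  have h1 : ∀ᶠ p : ℝ × M in nhds (u, y), p.1 < c := by
    have hop : IsOpen {p : ℝ × M | p.1 < c} := isOpen_lt continuous_fst continuous_const
    exact Filter.eventually_iff_exists_mem.2 ⟨_, hop.mem_nhds hc1, fun p hp => hp⟩
  have h2 : ∀ᶠ p : ℝ × M in nhds (u, y), ∀ s, 0 ≤ s → s ≤ c → φ s p.2 ∉ D :=
    continuous_snd.tendsto (u, y) |>.eventually hV
  have h3 : ∀ᶠ p : ℝ × M in nhdsWithin (u, y) (Ici 0 ×ˢ univ), p ∈ (Ici (0:ℝ)) ×ˢ (univ : Set M) :=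
    self_mem_nhdsWithin
  filter_upwards [(h1.and h2).filter_mono nhdsWithin_le_nhds, h3] with p ⟨hpc, hpav⟩ hpS
  have hp0 : 0 ≤ p.1 := hpS.1
  have hτ : ENNReal.ofReal c ≤ firstHittingTime φ D p.2 := le_tau φ D
    (fun s hs0 hsle => hpav s (le_of_lt hs0) hsle)
  have : ENNReal.ofReal p.1 < firstHittingTime φ D p.2 :=
    lt_of_lt_of_le ((ENNReal.ofReal_lt_ofReal_iff hcpos).2 hpc) hτ
  exact hψφ p.2 p.1 hp0 this


lemma tau_toReal_tendsto
    (hφcont : ContinuousOn (fun p : ℝ × M => φ p.1 p.2) (Ici 0 ×ˢ univ))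
    (hφ0 : ∀ x, φ 0 x = x)
    (hφadd : ∀ t s : ℝ, 0 ≤ t → 0 ≤ s → ∀ x, φ (t + s) x = φ t (φ s x))
    (hDcl : IsClosed D)
    (hSSTC : ∀ x ∈ D, satisfiesSSTC φ D I x)
    {y : M} (hy : y ∉ D) (hfin : firstHittingTime φ D y ≠ ⊤) :
    Filter.Tendsto (fun w => (firstHittingTime φ D w).toReal) (nhds y)
      (nhds (firstHittingTime φ D y).toReal) := by
  rw [Metric.tendsto_nhds]
  intro ε hε
  filter_upwards [tau_cont φ hφcont hφ0 hφadd hDcl hSSTC hy hfin (half_pos hε)] with w hw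
  rw [Real.dist_eq]
  calc |(firstHittingTime φ D w).toReal - (firstHittingTime φ D y).toReal| ≤ ε / 2 := hw.2
    _ < ε := by linarith

lemma nxt_tendsto
    (hφcont : ContinuousOn (fun p : ℝ × M => φ p.1 p.2) (Ici 0 ×ˢ univ))
    (hφ0 : ∀ x, φ 0 x = x)
    (hφadd : ∀ t s : ℝ, 0 ≤ t → 0 ≤ s → ∀ x, φ (t + s) x = φ t (φ s x))
    (hDcl : IsClosed D) (hIcont : ContinuousOn I D)
    (hSSTC : ∀ x ∈ D, satisfiesSSTC φ D I x)
    {y : M} (hy : y ∉ D) (hfin : firstHittingTime φ D y ≠ ⊤) :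
    Filter.Tendsto (nxt φ D I) (nhds y) (nhds (nxt φ D I y)) := by
  set r := (firstHittingTime φ D y).toReal with hr
  have hrpos : 0 < r := by
    obtain ⟨δ, hδ, hδle⟩ := tau_pos φ hφcont hφ0 hDcl hy
    have := ENNReal.toReal_mono hfin hδle
    rw [ENNReal.toReal_ofReal (le_of_lt hδ)] at this
    linarith
  have hzD : φ r y ∈ D := hit_mem φ hφcont hDcl hfin
  -- continuity of `w ↦ φ (τ w).toReal w` at `y`
  have hq : ContinuousAt (fun w => ((firstHittingTime φ D w).toReal, w)) y :=
    (tau_toReal_tendsto φ D I hφcont hφ0 hφadd hDcl hSSTC hy hfin).prodMk_nhds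
      continuousAt_id
  have hΦat : ContinuousAt (fun p : ℝ × M => φ p.1 p.2) (r, y) :=
    hφcont.continuousAt (prod_mem_nhds (Ici_mem_nhds hrpos) Filter.univ_mem)
  have hqt : Filter.Tendsto (fun w => ((firstHittingTime φ D w).toReal, w)) (nhds y)
      (nhds (r, y)) := hq.tendsto
  have hcomp : ContinuousAt (fun w => φ (firstHittingTime φ D w).toReal w) y :=
    Filter.Tendsto.comp hΦat hqt
  -- eventual finiteness
  have hev : ∀ᶠ w in nhds y, firstHittingTime φ D w ≠ ⊤ := by
    filter_upwards [tau_cont φ hφcont hφ0 hφadd hDcl hSSTC hy hfin one_pos] with w hw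
    exact hw.1
  have hmem : ∀ᶠ w in nhds y, φ (firstHittingTime φ D w).toReal w ∈ D := by
    filter_upwards [hev] with w hw
    exact hit_mem φ hφcont hDcl hw
  have htend : Filter.Tendsto (fun w => φ (firstHittingTime φ D w).toReal w) (nhds y)
      (nhdsWithin (φ r y) D) :=
    tendsto_nhdsWithin_iff.2 ⟨hcomp.tendsto, hmem⟩
  have hI : Filter.Tendsto (fun w => I (φ (firstHittingTime φ D w).toReal w)) (nhds y)
      (nhds (I (φ r y))) := (hIcont (φ r y) hzD).tendsto.comp htend
  have heq : ∀ᶠ w in nhds y, I (φ (firstHittingTime φ D w).toReal w) = nxt φ D I w := by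
    filter_upwards [hev] with w hw
    rw [nxt_eq φ D I hw]
  have : nxt φ D I y = I (φ r y) := nxt_eq φ D I hfin
  rw [this]
  exact hI.congr' heq

lemma psiCont
    (hφcont : ContinuousOn (fun p : ℝ × M => φ p.1 p.2) (Ici 0 ×ˢ univ))
    (hφ0 : ∀ x, φ 0 x = x)
    (hφadd : ∀ t s : ℝ, 0 ≤ t → 0 ≤ s → ∀ x, φ (t + s) x = φ t (φ s x))
    (hDcl : IsClosed D) (hIcont : ContinuousOn I D)
    (hID' : ∀ w ∈ I '' D, w ∉ D)
    (hSSTC : ∀ x ∈ D, satisfiesSSTC φ D I x)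
    {ξ : ℝ} (hξpos : 0 < ξ)
    (hξ : ∀ y ∈ I '' D, ENNReal.ofReal ξ ≤ firstHittingTime φ D y)
    (hψadd : ∀ t s : ℝ, 0 ≤ t → 0 ≤ s → ∀ x, ψ (t + s) x = ψ t (ψ s x))
    (hψφ : ∀ (x : M) (t : ℝ), 0 ≤ t → ENNReal.ofReal t < firstHittingTime φ D x →
      ψ t x = φ t x)
    (hψjump : ∀ x : M, firstHittingTime φ D x ≠ ⊤ →
      ψ (firstHittingTime φ D x).toReal x = I (φ (firstHittingTime φ D x).toReal x)) :
    ∀ n : ℕ, ∀ y, y ∉ D → ∀ u, 0 ≤ u → Good φ D I y u →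
      (firstHittingTime φ D y = ⊤ ∨ u ≤ (firstHittingTime φ D y).toReal + n * ξ) →
      ContinuousWithinAt (fun p : ℝ × M => ψ p.1 p.2) (Ici 0 ×ˢ univ) (u, y) := by
  intro n
  induction n with
  | zero =>
    intro y hy u hu hGood hbd
    refine psiContA φ D ψ hφcont hφ0 hDcl hψφ hy hu ?_
    rcases hbd with h | h
    · rw [h]; exact ENNReal.ofReal_lt_top
    · rcases eq_or_ne (firstHittingTime φ D y) ⊤ with hfin | hfin
      · rw [hfin]; exact ENNReal.ofReal_lt_top
      · simp only [Nat.cast_zero, zero_mul, add_zero] at h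
        have hne : u ≠ (firstHittingTime φ D y).toReal := by
          have := hGood 0
          simpa [tseq, yseq] using this
        have hlt : u < (firstHittingTime φ D y).toReal := lt_of_le_of_ne h hne
        calc ENNReal.ofReal u < ENNReal.ofReal (firstHittingTime φ D y).toReal :=
              (ENNReal.ofReal_lt_ofReal_iff (lt_of_le_of_lt hu hlt)).2 hlt
          _ = firstHittingTime φ D y := ENNReal.ofReal_toReal hfin
  | succ n ih =>
    intro y hy u hu hGood hbd
    rcases lt_or_ge (ENNReal.ofReal u) (firstHittingTime φ D y) with hlt | hge
    · exact psiContA φ D ψ hφcont hφ0 hDcl hψφ hy hu hlt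
    · -- past the first jump
      have hfin : firstHittingTime φ D y ≠ ⊤ :=
        ne_top_of_le_ne_top ENNReal.ofReal_ne_top hge
      set r := (firstHittingTime φ D y).toReal with hrdef
      have hr0 : 0 ≤ r := ENNReal.toReal_nonneg
      have hrpos : 0 < r := by
        obtain ⟨δ, hδ, hδle⟩ := tau_pos φ hφcont hφ0 hDcl hy
        have := ENNReal.toReal_mono hfin hδle
        rw [ENNReal.toReal_ofReal (le_of_lt hδ)] at this
        linarith
      have hru : r ≤ u := by
        have := ENNReal.toReal_mono ENNReal.ofReal_ne_top hge
        rwa [ENNReal.toReal_ofReal hu] at this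
      have hne : u ≠ r := by
        have := hGood 0
        simpa [tseq, yseq] using this
      have hrlt : r < u := lt_of_le_of_ne hru (Ne.symm hne)
      set y' := nxt φ D I y with hy'def
      have hmemID : y' ∈ I '' D := by
        rw [hy'def, nxt_eq φ D I hfin]
        exact ⟨_, hit_mem φ hφcont hDcl hfin, rfl⟩
      have hy'notD : y' ∉ D := hID' _ hmemID
      -- IH at (u - r, y')
      have hbd' : firstHittingTime φ D y' = ⊤ ∨
          u - r ≤ (firstHittingTime φ D y').toReal + n * ξ := by
        rcases eq_or_ne (firstHittingTime φ D y') ⊤ with h | h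
        · exact Or.inl h
        · refine Or.inr ?_
          have hξle : ξ ≤ (firstHittingTime φ D y').toReal := by
            have := ENNReal.toReal_mono h (hξ _ hmemID)
            rwa [ENNReal.toReal_ofReal (le_of_lt hξpos)] at this
          rcases hbd with hb | hb
          · exact absurd hb hfin
          · push_cast at hb ⊢
            linarith
      have hIH : ContinuousWithinAt (fun p : ℝ × M => ψ p.1 p.2) (Ici 0 ×ˢ univ) (u - r, y') :=
        ih y' hy'notD (u - r) (by linarith) (Good_shift φ D I hGood) hbd'
      -- the transition map `g`
      set g : ℝ × M → ℝ × M :=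
        fun p => (p.1 - (firstHittingTime φ D p.2).toReal, nxt φ D I p.2) with hgdef
      have hgcont : ContinuousAt g (u, y) := by
        refine ContinuousAt.prodMk ?_ ?_
        · exact (continuousAt_fst).sub
            ((tau_toReal_tendsto φ D I hφcont hφ0 hφadd hDcl hSSTC hy hfin).comp
              continuousAt_snd)
        · exact (nxt_tendsto φ D I hφcont hφ0 hφadd hDcl hIcont hSSTC hy hfin).comp
            continuousAt_snd
      have hguy : g (u, y) = (u - r, y') := rfl
      -- eventually `g p ∈ Ici 0 ×ˢ univ` and `ψ p.1 p.2 = ψ (g p).1 (g p).2`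
      set ε₀ := (u - r)/4 with hε₀def
      have hε₀pos : 0 < ε₀ := by rw [hε₀def]; linarith
      have hev1 : ∀ᶠ p : ℝ × M in nhds (u, y), |p.1 - u| < ε₀ := by
        have hop : IsOpen {p : ℝ × M | |p.1 - u| < ε₀} :=
          isOpen_lt (by fun_prop) continuous_const
        exact Filter.eventually_iff_exists_mem.2 ⟨_, hop.mem_nhds (by simp [hε₀pos]),
          fun p hp => hp⟩
      have hev2 : ∀ᶠ p : ℝ × M in nhds (u, y), firstHittingTime φ D p.2 ≠ ⊤ ∧
          |(firstHittingTime φ D p.2).toReal - r| ≤ ε₀ :=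
        continuous_snd.tendsto (u, y) |>.eventually
          (tau_cont φ hφcont hφ0 hφadd hDcl hSSTC hy hfin hε₀pos)
      have hkey : ∀ᶠ p : ℝ × M in nhds (u, y), firstHittingTime φ D p.2 ≠ ⊤ ∧
          0 < p.1 - (firstHittingTime φ D p.2).toReal := by
        filter_upwards [hev1, hev2] with p h1 h2
        refine ⟨h2.1, ?_⟩
        have := abs_lt.1 h1
        have h2' := abs_le.1 h2.2
        rw [hε₀def] at *
        linarith
      -- conclude via composition
      have hmaps : ∀ᶠ p : ℝ × M in nhds (u, y), g p ∈ (Ici (0:ℝ)) ×ˢ (univ : Set M) := by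
        filter_upwards [hkey] with p hp
        exact ⟨le_of_lt hp.2, mem_univ _⟩
      have hT1 : Filter.Tendsto g (nhdsWithin (u, y) (Ici 0 ×ˢ univ))
          (nhdsWithin (u - r, y') (Ici 0 ×ˢ univ)) := by
        rw [tendsto_nhdsWithin_iff]
        constructor
        · rw [← hguy]
          exact hgcont.tendsto.mono_left nhdsWithin_le_nhds
        · exact hmaps.filter_mono nhdsWithin_le_nhds
      have hT3 : Filter.Tendsto ((fun p : ℝ × M => ψ p.1 p.2) ∘ g)
          (nhdsWithin (u, y) (Ici 0 ×ˢ univ)) (nhds (ψ (u - r) y')) := Filter.Tendsto.comp hIH hT1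
      have heqev : ∀ᶠ p : ℝ × M in nhdsWithin (u, y) (Ici 0 ×ˢ univ),
          ((fun p : ℝ × M => ψ p.1 p.2) ∘ g) p = ψ p.1 p.2 := by
        filter_upwards [hkey.filter_mono nhdsWithin_le_nhds] with p hp
        rcases hp with ⟨hpfin, hppos⟩
        set ρ := (firstHittingTime φ D p.2).toReal with hρdef
        have hρ0 : 0 ≤ ρ := ENNReal.toReal_nonneg
        have hadd := hψadd (p.1 - ρ) ρ (le_of_lt hppos) hρ0 p.2
        rw [sub_add_cancel] at hadd
        have hj : ψ ρ p.2 = nxt φ D I p.2 := psi_jump_nxt φ D I ψ hψjump hpfin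
        simp only [Function.comp_apply, hgdef]
        rw [hadd, hj]
      have hval : ψ u y = ψ (u - r) y' := by
        have hadd := hψadd (u - r) r (by linarith) hr0 y
        rw [sub_add_cancel] at hadd
        rw [hadd, psi_jump_nxt φ D I ψ hψjump hfin]
      rw [ContinuousWithinAt]
      have := hT3.congr' heqev
      rwa [hval]


lemma nw_transfer
    (hψadd : ∀ t s : ℝ, 0 ≤ t → 0 ≤ s → ∀ x, ψ (t + s) x = ψ t (ψ s x))
    {x : M} {s : ℝ} (hs : 0 ≤ s) (hx : nonWandering ψ x)
    (hc : ContinuousAt (ψ s) x) : nonWandering ψ (ψ s x) := by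
  intro U hU hmem T hT
  have hpre : ψ s ⁻¹' U ∈ nhds x := hc.preimage_mem_nhds (hU.mem_nhds hmem)
  obtain ⟨V, hVsub, hVopen, hxV⟩ := mem_nhds_iff.1 hpre
  obtain ⟨t, hTt, w, hw1, hw2⟩ := hx V hVopen hxV T hT
  refine ⟨t, hTt, ψ s w, ?_, hVsub hw2⟩
  have ht0 : 0 ≤ t := le_trans (le_of_lt hT) hTt
  have hcomm : ψ t (ψ s w) = ψ s (ψ t w) := by
    rw [← hψadd t s ht0 hs w, ← hψadd s t hs ht0 w, add_comm]
  simp only [mem_preimage] at hw1 ⊢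
  rw [hcomm]
  exact hVsub hw1

end Psi


end Stmt7Aux

open Stmt7Aux

/-- Let (M,φ,D,I) be an impulsive dynamical system on a compact metric
space with I(D) ∩ D = ∅ and ψ the generated impulsive semiflow. Assume every point of D
satisfies the SSTC. Then the non-wandering set Ω_ψ is invariant off the impulsive set:
ψ_t(Ω_ψ \\ D) ⊆ Ω_ψ \\ D for every t > 0. -/
theorem stmt_7 {M : Type*} [MetricSpace M] [CompactSpace M]
    (φ : ℝ → M → M)
    (hφcont : ContinuousOn (fun p : ℝ × M => φ p.1 p.2) (Ici 0 ×ˢ univ))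
    (hφ0 : ∀ x, φ 0 x = x)
    (hφadd : ∀ t s : ℝ, 0 ≤ t → 0 ≤ s → ∀ x, φ (t + s) x = φ t (φ s x))
    (D : Set M) (hD : D.Nonempty) (hDcomp : IsCompact D)
    (I : M → M) (hIcont : ContinuousOn I D) (hID : (I '' D) ∩ D = ∅)
    -- ψ is the impulsive semiflow generated by (M,φ,D,I):
    (ψ : ℝ → M → M)
    (hψadd : ∀ t s : ℝ, 0 ≤ t → 0 ≤ s → ∀ x, ψ (t + s) x = ψ t (ψ s x))
    (hψφ : ∀ (x : M) (t : ℝ), 0 ≤ t → ENNReal.ofReal t < firstHittingTime φ D x →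
      ψ t x = φ t x)
    (hψjump : ∀ x : M, firstHittingTime φ D x ≠ ⊤ →
      ψ (firstHittingTime φ D x).toReal x = I (φ (firstHittingTime φ D x).toReal x))
    (hSSTC : ∀ x ∈ D, satisfiesSSTC φ D I x) :
    ∀ t : ℝ, 0 < t →
      ψ t '' ({x | nonWandering ψ x} \ D) ⊆ {x | nonWandering ψ x} \ D := by

  intro t ht
  rintro p ⟨x, ⟨hxNW, hxD⟩, rfl⟩
  simp only [mem_setOf_eq] at hxNW
  have hDcl : IsClosed D := hDcomp.isClosed
  have hID' : ∀ w ∈ I '' D, w ∉ D := by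
    intro w hw hwD
    have : w ∈ (I '' D) ∩ D := ⟨hw, hwD⟩
    rw [hID] at this
    exact this
  have hKcomp : IsCompact (I '' D) := hDcomp.image_of_continuousOn hIcont
  obtain ⟨ξ, hξpos, hξ⟩ := tau_unif φ hφcont hφ0 hDcl hKcomp hID'
  -- the image point is off `D`
  have hbound : ∀ u : ℝ, 0 < u → firstHittingTime φ D x = ⊤ ∨
      ∃ n : ℕ, u ≤ (firstHittingTime φ D x).toReal + n * ξ := by
    intro u hu
    obtain ⟨n, hn⟩ := exists_nat_ge (u / ξ)
    refine Or.inr ⟨n, ?_⟩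
    have : u ≤ n * ξ := by
      rw [div_le_iff₀ hξpos] at hn
      linarith
    have h0 : 0 ≤ (firstHittingTime φ D x).toReal := ENNReal.toReal_nonneg
    linarith
  have hynotD : ψ t x ∉ D := by
    obtain ⟨n, hn⟩ := exists_nat_ge (t / ξ)
    refine notD φ D I ψ hφcont hDcl hID' hξpos hξ hψadd hψφ hψjump n x hxD t ht (Or.inr ?_)
    rw [div_le_iff₀ hξpos] at hn
    have h0 : 0 ≤ (firstHittingTime φ D x).toReal := ENNReal.toReal_nonneg
    linarith
  refine ⟨?_, hynotD⟩
  -- nonwandering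
  simp only [mem_setOf_eq]
  intro U hU hmem T hT
  set y := ψ t x with hy
  obtain ⟨δ₀, hδ₀, hδ₀le⟩ := tau_pos φ hφcont hφ0 hDcl hynotD
  -- small times keep `φ _ y` in `U`
  have hc0 : ContinuousWithinAt (fun s : ℝ => φ s y) (Ici 0) 0 :=
    (flow_contOn φ hφcont y).continuousWithinAt self_mem_Ici
  have hevU : ∀ᶠ s in nhdsWithin (0:ℝ) (Ici 0), φ s y ∈ U := by
    apply hc0.eventually_mem
    simp only [hφ0 y]
    exact hU.mem_nhds hmem
  rw [eventually_nhdsWithin_iff] at hevU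
  rcases Metric.eventually_nhds_iff.1 hevU with ⟨m₁, hm₁, hball⟩
  -- choose a good small `δ`
  set Bad : Set ℝ := Set.range (fun k : ℕ => tseq φ D I x (k+1)) with hBad
  have hBadC : Bad.Countable := countable_range _
  have hdense : Dense Badᶜ := Set.Countable.dense_compl ℝ hBadC
  set m := min m₁ δ₀ with hm
  have hmpos : 0 < m := lt_min hm₁ hδ₀
  obtain ⟨u, huIoo, huBad⟩ : ∃ u ∈ Ioo t (t + m), u ∈ Badᶜ := by
    rcases hdense.exists_mem_open isOpen_Ioo
      (Set.nonempty_Ioo.2 (show t < t + m by linarith)) with ⟨u, hu1, hu2⟩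
    exact ⟨u, hu2, hu1⟩
  set δ := u - t with hδdef
  have hδpos : 0 < δ := by rw [hδdef]; linarith [huIoo.1]
  have hδm : δ < m := by rw [hδdef]; linarith [huIoo.2]
  have hGood : Good φ D I x u := by
    intro k habs
    exact huBad ⟨k, habs.symm⟩
  have hu0 : 0 ≤ u := by linarith [huIoo.1]
  -- continuity of `ψ u` at `x`
  have hCWA : ContinuousWithinAt (fun p : ℝ × M => ψ p.1 p.2) (Ici 0 ×ˢ univ) (u, x) := by
    obtain ⟨n, hn⟩ := exists_nat_ge (u / ξ)
    refine psiCont φ D I ψ hφcont hφ0 hφadd hDcl hIcont hID' hSSTC hξpos hξ hψadd hψφ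
      hψjump n x hxD u hu0 hGood (Or.inr ?_)
    rw [div_le_iff₀ hξpos] at hn
    have h0 : 0 ≤ (firstHittingTime φ D x).toReal := ENNReal.toReal_nonneg
    linarith
  have hCA : ContinuousAt (ψ u) x := by
    have hemb : Filter.Tendsto (fun w : M => (u, w)) (nhds x)
        (nhdsWithin (u, x) (Ici 0 ×ˢ univ)) := by
      rw [tendsto_nhdsWithin_iff]
      exact ⟨Filter.Tendsto.prodMk_nhds tendsto_const_nhds Filter.tendsto_id,
        Filter.Eventually.of_forall fun w => ⟨hu0, mem_univ _⟩⟩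
    have := Filter.Tendsto.comp hCWA hemb
    exact this
  have hzNW : nonWandering ψ (ψ u x) := nw_transfer ψ hψadd hu0 hxNW hCA
  have hz : ψ u x = φ δ y := by
    have h1 : ψ (δ + t) x = ψ δ (ψ t x) := hψadd δ t (le_of_lt hδpos) (le_of_lt ht) x
    have h2 : u = δ + t := by rw [hδdef]; ring
    have h3 : ψ δ y = φ δ y := by
      refine hψφ y δ (le_of_lt hδpos) ?_
      refine lt_of_lt_of_le ?_ hδ₀le
      exact (ENNReal.ofReal_lt_ofReal_iff hδ₀).2 (lt_of_lt_of_le hδm (min_le_right _ _))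
    rw [h2, h1, ← hy, h3]
  have hzU : ψ u x ∈ U := by
    rw [hz]
    refine hball (y := δ) ?_ (le_of_lt hδpos)
    rw [Real.dist_eq, sub_zero, abs_of_pos hδpos]
    exact lt_of_lt_of_le hδm (min_le_left _ _)
  exact hzNW U hU hzU T hT
end

section
/- Let M be a compact metric space, φ : ℝ × M → M a continuous flow (φ(0,·) = id, φ(t+s,·) = φ(t,·)∘φ(s,·) for all t,s ∈ ℝ), D ⊂ M a nonempty compact set, and I : D → M continuous with I(D) ∩ D = ∅. Let ψ be the impulsive semiflow generated by (M, φ|_{[0,∞)×M}, D, I). If ξ > 0 is such that I(D) ∩ D_ξ = ∅, where D_ξ = {φ(t,x) : x ∈ D, 0 < t < ξ}, then the set X_ξ = M \ (D_ξ ∪ D) is forward invariant under ψ: ψ(t, X_ξ) ⊆ X_ξ for all t ≥ 0. -/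
open Set
open scoped ENNReal

lemma fht_ge {M : Type*} {φ : ℝ → M → M} {D : Set M} {y : M} {c : ℝ}
    (h : ∀ t : ℝ, 0 < t → φ t y ∈ D → c ≤ t) :
    ENNReal.ofReal c ≤ firstHittingTime φ D y := by
  refine le_sInf ?_
  rintro r ⟨t, ht, htD, rfl⟩
  exact ENNReal.ofReal_le_ofReal (h t ht htD)

lemma fht_notMem {M : Type*} {φ : ℝ → M → M} {D : Set M} {y : M} {t : ℝ}
    (ht : 0 < t) (h : ENNReal.ofReal t < firstHittingTime φ D y) : φ t y ∉ D := by
  intro hmem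
  have : firstHittingTime φ D y ≤ ENNReal.ofReal t :=
    sInf_le (show ENNReal.ofReal t ∈
      {r : ℝ≥0∞ | ∃ s : ℝ, 0 < s ∧ φ s y ∈ D ∧ r = ENNReal.ofReal s} from ⟨t, ht, hmem, rfl⟩)
  exact absurd this (not_le.mpr h)

lemma exists_delta {M : Type*} [MetricSpace M] {φ : ℝ → M → M}
    (hφcont : Continuous fun p : ℝ × M => φ p.1 p.2) (hφ0 : ∀ x, φ 0 x = x)
    {D : Set M} (hDc : IsClosed D) {y : M} (hy : y ∉ D) :
    ∃ δ > 0, ∀ t : ℝ, |t| < δ → φ t y ∉ D := by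
  have hf : Continuous fun t : ℝ => φ t y :=
    hφcont.comp (continuous_id.prodMk continuous_const)
  have hopen : IsOpen ((fun t : ℝ => φ t y) ⁻¹' Dᶜ) := hDc.isOpen_compl.preimage hf
  have h0 : (0 : ℝ) ∈ (fun t : ℝ => φ t y) ⁻¹' Dᶜ := by
    simp only [mem_preimage, mem_compl_iff, hφ0]; exact hy
  obtain ⟨δ, hδ, hball⟩ := Metric.isOpen_iff.mp hopen 0 h0
  refine ⟨δ, hδ, fun t ht => ?_⟩
  have : t ∈ Metric.ball (0 : ℝ) δ := by
    simpa [Real.dist_eq] using ht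
  exact hball this

lemma fht_pos {M : Type*} [MetricSpace M] {φ : ℝ → M → M}
    (hφcont : Continuous fun p : ℝ × M => φ p.1 p.2) (hφ0 : ∀ x, φ 0 x = x)
    {D : Set M} (hDc : IsClosed D) {y : M} (hy : y ∉ D) :
    0 < firstHittingTime φ D y := by
  obtain ⟨δ, hδ, hδ'⟩ := exists_delta hφcont hφ0 hDc hy
  have : ENNReal.ofReal δ ≤ firstHittingTime φ D y := by
    refine fht_ge fun t ht htD => ?_
    by_contra hlt
    exact hδ' t (by rw [abs_of_pos ht]; linarith) htD
  exact lt_of_lt_of_le (by simpa using hδ) this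

lemma fht_spec {M : Type*} [MetricSpace M] {φ : ℝ → M → M}
    (hφcont : Continuous fun p : ℝ × M => φ p.1 p.2) (hφ0 : ∀ x, φ 0 x = x)
    {D : Set M} (hDc : IsClosed D) {y : M} (hy : y ∉ D)
    (hfin : firstHittingTime φ D y ≠ ⊤) :
    ∃ T : ℝ, 0 < T ∧ firstHittingTime φ D y = ENNReal.ofReal T ∧ φ T y ∈ D := by
  set S : Set ℝ := {t : ℝ | 0 < t ∧ φ t y ∈ D} with hS
  have hSne : S.Nonempty := by
    by_contra hemp
    apply hfin
    have : {r : ℝ≥0∞ | ∃ t : ℝ, 0 < t ∧ φ t y ∈ D ∧ r = ENNReal.ofReal t} = ∅ := by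
      ext r; simp only [mem_setOf_eq, mem_empty_iff_false, iff_false]
      rintro ⟨t, ht, htD, rfl⟩
      exact hemp ⟨t, ht, htD⟩
    rw [firstHittingTime, this, sInf_empty]
  obtain ⟨δ, hδ, hδ'⟩ := exists_delta hφcont hφ0 hDc hy
  have hbdd : BddBelow S := ⟨0, fun t ht => le_of_lt ht.1⟩
  set T := sInf S with hT
  have hTδ : δ ≤ T := by
    refine le_csInf hSne fun t ht => ?_
    by_contra hlt
    exact hδ' t (by rw [abs_of_pos ht.1]; linarith) ht.2
  have hTpos : 0 < T := lt_of_lt_of_le hδ hTδ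
  have hf : Continuous fun t : ℝ => φ t y :=
    hφcont.comp (continuous_id.prodMk continuous_const)
  have hTD : φ T y ∈ D := by
    have hclos : T ∈ closure S := csInf_mem_closure hSne hbdd
    have hsub : closure S ⊆ {t : ℝ | φ t y ∈ D} :=
      closure_minimal (fun t ht => ht.2) (hDc.preimage hf)
    exact hsub hclos
  refine ⟨T, hTpos, le_antisymm ?_ ?_, hTD⟩
  · exact sInf_le (show ENNReal.ofReal T ∈
      {r : ℝ≥0∞ | ∃ s : ℝ, 0 < s ∧ φ s y ∈ D ∧ r = ENNReal.ofReal s} from ⟨T, hTpos, hTD, rfl⟩)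
  · refine le_sInf ?_
    rintro r ⟨t, ht, htD, rfl⟩
    exact ENNReal.ofReal_le_ofReal (csInf_le hbdd ⟨ht, htD⟩)

lemma eps0_exists {M : Type*} [MetricSpace M] {φ : ℝ → M → M}
    (hφcont : Continuous fun p : ℝ × M => φ p.1 p.2) (hφ0 : ∀ x, φ 0 x = x)
    {D E : Set M} (hDc : IsClosed D) (hEc : IsCompact E) (hED : E ∩ D = ∅) :
    ∃ ε : ℝ, 0 < ε ∧ ∀ y ∈ E, ∀ t : ℝ, 0 < t → φ t y ∈ D → ε ≤ t := by
  set K : Set (ℝ × M) := {p : ℝ × M | p.1 ∈ Icc (0:ℝ) 1 ∧ p.2 ∈ E ∧ φ p.1 p.2 ∈ D} with hK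
  have hKc : IsCompact K := by
    have hsub : K ⊆ (Icc (0:ℝ) 1) ×ˢ E := fun p hp => ⟨hp.1, hp.2.1⟩
    have hclosed : IsClosed K := by
      have h1 : IsClosed {p : ℝ × M | p.1 ∈ Icc (0:ℝ) 1} := isClosed_Icc.preimage continuous_fst
      have h2 : IsClosed {p : ℝ × M | p.2 ∈ E} := hEc.isClosed.preimage continuous_snd
      have h3 : IsClosed {p : ℝ × M | φ p.1 p.2 ∈ D} := hDc.preimage hφcont
      exact (h1.inter (h2.inter h3))
    exact ((isCompact_Icc.prod hEc).of_isClosed_subset hclosed hsub)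
  set S : Set ℝ := Prod.fst '' K with hSdef
  have hSc : IsCompact S := hKc.image continuous_fst
  have hS0 : (0 : ℝ) ∉ S := by
    rintro ⟨⟨t, y⟩, hp, ht0⟩
    simp only at ht0
    subst ht0
    have : y ∈ E ∩ D := ⟨hp.2.1, by rw [← hφ0 y]; exact hp.2.2⟩
    rw [hED] at this
    exact this
  by_cases hSne : S.Nonempty
  · set ε := sInf S with hε
    have hεS : ε ∈ S := hSc.sInf_mem hSne
    obtain ⟨⟨t0, y0⟩, hp0, ht00⟩ := hεS
    have hεpos : 0 < ε := by
      rcases lt_or_eq_of_le (show (0:ℝ) ≤ ε by rw [← ht00]; exact hp0.1.1) with h | h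
      · exact h
      · exact absurd (h ▸ (hSc.sInf_mem hSne)) hS0
    have hε1 : ε ≤ 1 := by rw [← ht00]; exact hp0.1.2
    refine ⟨ε, hεpos, fun y hy t ht htD => ?_⟩
    rcases le_or_gt t 1 with h1 | h1
    · exact csInf_le hSc.bddBelow ⟨(t, y), ⟨⟨le_of_lt ht, h1⟩, hy, htD⟩, rfl⟩
    · linarith
  · refine ⟨1, one_pos, fun y hy t ht htD => ?_⟩
    by_contra hlt
    push_neg at hlt
    exact hSne ⟨t, ⟨(t, y), ⟨⟨le_of_lt ht, le_of_lt hlt⟩, hy, htD⟩, rfl⟩⟩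

lemma flow_stays {M : Type*} {φ : ℝ → M → M}
    (hφ0 : ∀ x, φ 0 x = x) (hφadd : ∀ t s : ℝ, ∀ x, φ (t + s) x = φ t (φ s x))
    {D : Set M} {ξ : ℝ} {Dξ : Set M}
    (hDξ : Dξ = {y | ∃ x ∈ D, ∃ t : ℝ, 0 < t ∧ t < ξ ∧ y = φ t x})
    {x : M} (hxD : x ∉ D) (hxDξ : x ∉ Dξ) {t : ℝ} (ht : 0 ≤ t)
    (hlt : ENNReal.ofReal t < firstHittingTime φ D x) :
    φ t x ∉ D ∧ φ t x ∉ Dξ := by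
  rcases eq_or_lt_of_le ht with h0 | htpos
  · rw [← h0, hφ0]; exact ⟨hxD, hxDξ⟩
  refine ⟨fht_notMem htpos hlt, ?_⟩
  intro hmem
  rw [hDξ] at hmem
  obtain ⟨z, hz, s, hs, hsξ, heq⟩ := hmem
  rcases lt_trichotomy s t with hst | hst | hst
  · -- φ (t - s) x = z ∈ D, contradicting t - s < τ
    have key : φ (t - s) x = z := by
      have h1 : t - s = -s + t := by ring
      rw [h1, hφadd, heq, ← hφadd, neg_add_cancel, hφ0]
    have hlt' : ENNReal.ofReal (t - s) < firstHittingTime φ D x :=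
      lt_of_le_of_lt (ENNReal.ofReal_le_ofReal (by linarith)) hlt
    exact fht_notMem (by linarith) hlt' (key ▸ hz)
  · -- s = t : x = z ∈ D
    apply hxD
    have key : φ (t - s) x = z := by
      have h1 : t - s = -s + t := by ring
      rw [h1, hφadd, heq, ← hφadd, neg_add_cancel, hφ0]
    rw [hst, sub_self, hφ0] at key
    exact key ▸ hz
  · -- t < s : x = φ (s - t) z ∈ Dξ
    apply hxDξ
    have key : φ (s - t) z = x := by
      have h1 : s - t = -t + s := by ring
      rw [h1, hφadd, ← heq, ← hφadd, neg_add_cancel, hφ0]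
    rw [hDξ]
    exact ⟨z, hz, s - t, by linarith, by linarith, key.symm⟩

/-- Let M be a compact metric space, φ a continuous flow, D ⊆ M nonempty
compact, I : D → M continuous with I(D) ∩ D = ∅, and ψ the impulsive semiflow generated
by (M, φ|₍₀,∞₎, D, I).  If ξ > 0 is such that I(D) ∩ D_ξ = ∅, where
D_ξ = {φ(t,x) : x ∈ D, 0 < t < ξ}, then X_ξ = M \ (D_ξ ∪ D) is forward invariant
under ψ: ψ(t, X_ξ) ⊆ X_ξ for all t ≥ 0. -/
theorem stmt_12 {M : Type*} [MetricSpace M] [CompactSpace M]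
    (φ : ℝ → M → M)
    (hφcont : Continuous fun p : ℝ × M => φ p.1 p.2)
    (hφ0 : ∀ x, φ 0 x = x)
    (hφadd : ∀ t s : ℝ, ∀ x, φ (t + s) x = φ t (φ s x))
    (D : Set M) (hD : D.Nonempty) (hDcomp : IsCompact D)
    (I : M → M) (hIcont : ContinuousOn I D) (hID : (I '' D) ∩ D = ∅)
    -- ψ is the impulsive semiflow generated by (M, φ|_{[0,∞)×M}, D, I):
    (ψ : ℝ → M → M)
    (hψadd : ∀ t s : ℝ, 0 ≤ t → 0 ≤ s → ∀ x, ψ (t + s) x = ψ t (ψ s x))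
    (hψφ : ∀ (x : M) (t : ℝ), 0 ≤ t → ENNReal.ofReal t < firstHittingTime φ D x →
      ψ t x = φ t x)
    (hψjump : ∀ x : M, firstHittingTime φ D x ≠ ⊤ →
      ψ (firstHittingTime φ D x).toReal x = I (φ (firstHittingTime φ D x).toReal x))
    (ξ : ℝ) (hξ : 0 < ξ)
    (Dξ Xξ : Set M)
    (hDξ : Dξ = {y | ∃ x ∈ D, ∃ t : ℝ, 0 < t ∧ t < ξ ∧ y = φ t x})
    (hXξ : Xξ = univ \ (Dξ ∪ D))
    (hIDξ : (I '' D) ∩ Dξ = ∅) :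
    ∀ t : ℝ, 0 ≤ t → ψ t '' Xξ ⊆ Xξ := by
  have hDc : IsClosed D := hDcomp.isClosed
  have hEc : IsCompact (I '' D) := hDcomp.image_of_continuousOn hIcont
  have hInotD : ∀ y ∈ I '' D, y ∉ D := fun y hy hyD =>
    (eq_empty_iff_forall_notMem.mp hID y) ⟨hy, hyD⟩
  have hInotDξ : ∀ y ∈ I '' D, y ∉ Dξ := fun y hy hyD =>
    (eq_empty_iff_forall_notMem.mp hIDξ y) ⟨hy, hyD⟩
  obtain ⟨ε₀, hε₀pos, hε₀⟩ := eps0_exists hφcont hφ0 hDc hEc hID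
  have hε₀τ : ∀ y ∈ I '' D, ENNReal.ofReal ε₀ ≤ firstHittingTime φ D y :=
    fun y hy => fht_ge (hε₀ y hy)
  -- key induction: starting from I '' D, with at most n further jumps
  have key : ∀ n : ℕ, ∀ t : ℝ, 0 ≤ t → t ≤ (n : ℝ) * ε₀ → ∀ y ∈ I '' D,
      ψ t y ∉ D ∧ ψ t y ∉ Dξ := by
    intro n
    induction n with
    | zero =>
      intro t ht htle y hy
      have ht0 : t = 0 := le_antisymm (by simpa using htle) ht
      subst ht0
      have hτpos : (ENNReal.ofReal 0) < firstHittingTime φ D y := by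
        refine lt_of_lt_of_le ?_ (hε₀τ y hy)
        simpa using ENNReal.ofReal_pos.mpr hε₀pos
      rw [hψφ y 0 le_rfl hτpos, hφ0]
      exact ⟨hInotD y hy, hInotDξ y hy⟩
    | succ n ih =>
      intro t ht htle y hy
      rcases lt_or_ge (ENNReal.ofReal t) (firstHittingTime φ D y) with hlt | hge
      · rw [hψφ y t ht hlt]
        exact flow_stays hφ0 hφadd hDξ (hInotD y hy) (hInotDξ y hy) ht hlt
      · have hfin : firstHittingTime φ D y ≠ ⊤ :=
          ne_top_of_le_ne_top ENNReal.ofReal_ne_top hge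
        obtain ⟨T, hT, hτ, hTD⟩ := fht_spec hφcont hφ0 hDc (hInotD y hy) hfin
        have hTt : T ≤ t := by
          rw [hτ] at hge
          exact (ENNReal.ofReal_le_ofReal_iff ht).mp hge
        have hεT : ε₀ ≤ T := hε₀ y hy T hT hTD
        have hjump : ψ T y = I (φ T y) := by
          have := hψjump y hfin
          rwa [hτ, ENNReal.toReal_ofReal hT.le] at this
        have hsplit : ψ t y = ψ (t - T) (ψ T y) := by
          have h := hψadd (t - T) T (by linarith) hT.le y
          rwa [sub_add_cancel] at h
        rw [hsplit, hjump]
        have hmem : I (φ T y) ∈ I '' D := ⟨φ T y, hTD, rfl⟩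
        refine ih (t - T) (by linarith) ?_ _ hmem
        have hcast : ((n + 1 : ℕ) : ℝ) * ε₀ = (n : ℝ) * ε₀ + ε₀ := by push_cast; ring
        rw [hcast] at htle
        linarith
  intro t ht
  rintro _ ⟨x, hx, rfl⟩
  rw [hXξ] at hx ⊢
  have hxD : x ∉ D := fun h => hx.2 (Or.inr h)
  have hxDξ : x ∉ Dξ := fun h => hx.2 (Or.inl h)
  refine ⟨trivial, ?_⟩
  have hgoal : ψ t x ∉ D ∧ ψ t x ∉ Dξ := by
    rcases lt_or_ge (ENNReal.ofReal t) (firstHittingTime φ D x) with hlt | hge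
    · rw [hψφ x t ht hlt]
      exact flow_stays hφ0 hφadd hDξ hxD hxDξ ht hlt
    · have hfin : firstHittingTime φ D x ≠ ⊤ :=
        ne_top_of_le_ne_top ENNReal.ofReal_ne_top hge
      obtain ⟨T, hT, hτ, hTD⟩ := fht_spec hφcont hφ0 hDc hxD hfin
      have hTt : T ≤ t := by
        rw [hτ] at hge
        exact (ENNReal.ofReal_le_ofReal_iff ht).mp hge
      have hjump : ψ T x = I (φ T x) := by
        have := hψjump x hfin
        rwa [hτ, ENNReal.toReal_ofReal hT.le] at this
      have hsplit : ψ t x = ψ (t - T) (ψ T x) := by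
        have h := hψadd (t - T) T (by linarith) hT.le x
        rwa [sub_add_cancel] at h
      rw [hsplit, hjump]
      have hmem : I (φ T x) ∈ I '' D := ⟨φ T x, hTD, rfl⟩
      set n : ℕ := ⌈(t - T) / ε₀⌉₊ with hn
      refine key n (t - T) (by linarith) ?_ _ hmem
      have h1 : (t - T) / ε₀ ≤ (n : ℝ) := Nat.le_ceil _
      rwa [div_le_iff₀ hε₀pos] at h1
  rintro (h | h)
  · exact hgoal.2 h
  · exact hgoal.1 h
end
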